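/- arXiv:2604.20016 — 13 statements merged into one kernel-verified Lean document; each statement's English description precedes it below -/
import Mathlib

section
/- For any configuration of p-values and weights, every hypothesis rejected by the weighted alternative Holm procedure (WAP) is also rejected by the weighted Holm procedure (WHP); that is, the WAP rejection set is contained in the WHP rejection set. -/
open Finset

/-- The weighted Holm procedure (WHP): given a permutation `σ` sorting the weighted
p-values `p i / w i` increasingly, it rejects hypothesis `H_{σ r}` iff
`p (σ j) / w (σ j) ≤ α / ∑_{k=j}^{m} w (σ k)` for all `j ≤ r`. -/
def whpRejects (m : ℕ) (p w : Fin m → ℝ) (α : ℝ) (σ : Equiv.Perm (Fin m)) (i : Fin m) : Prop :=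
  ∃ r : Fin m, σ r = i ∧
    ∀ j ≤ r, p (σ j) / w (σ j) ≤ α / ∑ k ∈ Finset.Ici j, w (σ k)

/-- The weighted alternative Holm procedure (WAP): given a permutation `τ` sorting the raw
p-values increasingly, it rejects hypothesis `H_{τ r}` iff
`p (τ j) ≤ w (τ j) * α / ∑_{k=j}^{m} w (τ k)` for all `j ≤ r`. -/
def wapRejects (m : ℕ) (p w : Fin m → ℝ) (α : ℝ) (τ : Equiv.Perm (Fin m)) (i : Fin m) : Prop :=
  ∃ r : Fin m, τ r = i ∧
    ∀ j ≤ r, p (τ j) ≤ w (τ j) * α / ∑ k ∈ Finset.Ici j, w (τ k)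

/-- every hypothesis rejected by WAP is also rejected by WHP. -/
theorem wap_subset_whp (m : ℕ) (hm : 1 ≤ m) (p w : Fin m → ℝ) (α : ℝ)
    (hp : ∀ i, p i ∈ Set.Icc (0 : ℝ) 1) (hw : ∀ i, 0 < w i)
    (hα : α ∈ Set.Ioo (0 : ℝ) 1)
    (hpdist : Function.Injective p)
    (hptdist : Function.Injective fun i => p i / w i)
    (σ : Equiv.Perm (Fin m)) (hσ : Monotone fun j => p (σ j) / w (σ j))
    (τ : Equiv.Perm (Fin m)) (hτ : Monotone fun j => p (τ j))
    (i : Fin m) (h : wapRejects m p w α τ i) :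
    whpRejects m p w α σ i := by
  obtain ⟨r, hτr, hcond⟩ := h
  refine ⟨σ.symm i, Equiv.apply_symm_apply σ i, ?_⟩
  intro j hj
  have hf : StrictMono fun k => p (σ k) / w (σ k) :=
    hσ.strictMono_of_injective (hptdist.comp σ.injective)
  have hg : StrictMono fun k => p (τ k) :=
    hτ.strictMono_of_injective (hpdist.comp τ.injective)
  set A : Finset (Fin m) := (Finset.Ici j).image σ with hA
  have hiA : i ∈ A :=
    Finset.mem_image.2 ⟨σ.symm i, Finset.mem_Ici.2 hj, Equiv.apply_symm_apply σ i⟩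
  obtain ⟨hs, hsA, hsmin⟩ := A.exists_min_image p ⟨i, hiA⟩
  have hj'r : τ.symm hs ≤ r := by
    have h1 : p (τ (τ.symm hs)) ≤ p (τ r) := by
      rw [Equiv.apply_symm_apply, hτr]; exact hsmin i hiA
    exact hg.le_iff_le.1 h1
  have hwap := hcond _ hj'r
  rw [Equiv.apply_symm_apply] at hwap
  set B : Finset (Fin m) := (Finset.Ici (τ.symm hs)).image τ with hB
  have hsumB : ∑ k ∈ Finset.Ici (τ.symm hs), w (τ k) = ∑ x ∈ B, w x :=
    (Finset.sum_image (fun a _ b _ hab => τ.injective hab)).symm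
  have hsumA : ∑ k ∈ Finset.Ici j, w (σ k) = ∑ x ∈ A, w x :=
    (Finset.sum_image (fun a _ b _ hab => σ.injective hab)).symm
  have hAB : A ⊆ B := by
    intro x hx
    have hxA : p hs ≤ p x := hsmin x hx
    have hle : τ.symm hs ≤ τ.symm x := by
      apply hg.le_iff_le.1
      simpa [Equiv.apply_symm_apply] using hxA
    exact Finset.mem_image.2 ⟨τ.symm x, Finset.mem_Ici.2 hle, Equiv.apply_symm_apply τ x⟩
  have hApos : 0 < ∑ x ∈ A, w x := Finset.sum_pos (fun x _ => hw x) ⟨i, hiA⟩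
  have hABsum : ∑ x ∈ A, w x ≤ ∑ x ∈ B, w x :=
    Finset.sum_le_sum_of_subset_of_nonneg hAB (fun x _ _ => (hw x).le)
  have hBpos : 0 < ∑ x ∈ B, w x := lt_of_lt_of_le hApos hABsum
  have h1 : p (σ j) / w (σ j) ≤ p hs / w hs := by
    obtain ⟨k, hk, hks⟩ := Finset.mem_image.1 hsA
    rw [← hks]
    exact hf.monotone (Finset.mem_Ici.1 hk)
  have h2 : p hs / w hs ≤ α / ∑ x ∈ B, w x := by
    rw [hsumB] at hwap
    have hws : 0 < w hs := hw hs
    rw [div_le_div_iff₀ hws hBpos]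
    rw [le_div_iff₀ hBpos] at hwap
    linarith
  have h3 : α / ∑ x ∈ B, w x ≤ α / ∑ x ∈ A, w x :=
    div_le_div_of_nonneg_left hα.1.le hApos hABsum
  rw [hsumA]
  exact h1.trans (h2.trans h3)
end

section
/- The closed testing procedure whose local test for each nonempty I ⊆ {1,…,m} rejects H_I iff min_{i∈I} p_i ≤ (w_{i_I}/∑_{j∈I} w_j)·α is equivalent to WAP: for every index i ∈ {1,…,m}, the closed testing procedure rejects H_i if and only if WAP rejects H_i. -/
open Finset

/-- WAP local test for the intersection hypothesis `H_I`: rejects iff the smallest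
p-value over `I`, attained at some `iI ∈ I`, satisfies `p iI ≤ (w iI / ∑_{j∈I} w j) * α`. -/
def wapLocal (m : ℕ) (p w : Fin m → ℝ) (α : ℝ) (I : Finset (Fin m)) : Prop :=
  ∃ iI ∈ I, (∀ j ∈ I, p iI ≤ p j) ∧ p iI ≤ (w iI / ∑ j ∈ I, w j) * α

/-- the closed testing procedure with the WAP local tests is equivalent to WAP:
for every index `i`, the CTP rejects `H_i` (i.e. every nonempty `I` containing `i` is locally
rejected) iff WAP rejects `H_i`. -/
theorem ctp_wapLocal_iff_wap (m : ℕ) (hm : 1 ≤ m) (p w : Fin m → ℝ) (α : ℝ)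
    (hp : ∀ i, p i ∈ Set.Icc (0 : ℝ) 1) (hw : ∀ i, 0 < w i)
    (hα : α ∈ Set.Ioo (0 : ℝ) 1)
    (hpdist : Function.Injective p)
    (τ : Equiv.Perm (Fin m)) (hτ : Monotone fun j => p (τ j))
    (i : Fin m) :
    (∀ I : Finset (Fin m), I.Nonempty → i ∈ I → wapLocal m p w α I) ↔
      wapRejects m p w α τ i := by
  have hstrict : StrictMono fun j => p (τ j) :=
    hτ.strictMono_of_injective (hpdist.comp τ.injective)
  have hsumI : ∀ j : Fin m, ∑ x ∈ (Finset.Ici j).image τ, w x = ∑ k ∈ Finset.Ici j, w (τ k) :=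
    fun j => Finset.sum_image (fun x _ y _ h => τ.injective h)
  constructor
  · intro h
    refine ⟨τ.symm i, by simp, fun j hj => ?_⟩
    set I := (Finset.Ici j).image τ with hI
    have hiI : i ∈ I := mem_image.mpr ⟨τ.symm i, by simpa using hj, by simp⟩
    obtain ⟨a, haI, hamin, ha⟩ := h I ⟨i, hiI⟩ hiI
    have haj : a = τ j := by
      obtain ⟨k, hk, rfl⟩ := mem_image.mp haI
      have h1 : p (τ j) ≤ p (τ k) := hτ (mem_Ici.mp hk)
      have h2 : p (τ k) ≤ p (τ j) := hamin _ (mem_image.mpr ⟨j, by simp, rfl⟩)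
      exact hpdist (le_antisymm h2 h1)
    subst haj
    rw [hsumI j] at ha
    calc p (τ j) ≤ (w (τ j) / ∑ k ∈ Finset.Ici j, w (τ k)) * α := ha
      _ = w (τ j) * α / ∑ k ∈ Finset.Ici j, w (τ k) := by ring
  · rintro ⟨r, rfl, hwap⟩
    intro I hne hiI
    obtain ⟨a, haI, hamin⟩ := I.exists_min_image p hne
    refine ⟨a, haI, hamin, ?_⟩
    set j := τ.symm a with hj
    have hτj : τ j = a := by simp [hj]
    have hjr : j ≤ r := by
      by_contra hlt
      push_neg at hlt
      have h2 : p (τ r) < p (τ j) := hstrict hlt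
      rw [hτj] at h2
      exact absurd (hamin _ hiI) (not_le.mpr h2)
    have h1 := hwap j hjr
    rw [hτj] at h1
    have hsub : I ⊆ (Finset.Ici j).image τ := by
      intro x hx
      refine mem_image.mpr ⟨τ.symm x, mem_Ici.mpr ?_, by simp⟩
      by_contra hlt
      push_neg at hlt
      have h3 : p (τ (τ.symm x)) < p (τ j) := hstrict hlt
      simp only [Equiv.apply_symm_apply, hτj] at h3
      exact absurd (hamin _ hx) (not_le.mpr h3)
    have hsumle : ∑ x ∈ I, w x ≤ ∑ k ∈ Finset.Ici j, w (τ k) := by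
      rw [← hsumI j]
      exact Finset.sum_le_sum_of_subset_of_nonneg hsub (fun x _ _ => (hw x).le)
    have hpos : 0 < ∑ x ∈ I, w x := Finset.sum_pos (fun x _ => hw x) hne
    have hnum : 0 ≤ w a * α := mul_nonneg (hw a).le hα.1.le
    calc p a ≤ w a * α / ∑ k ∈ Finset.Ici j, w (τ k) := h1
      _ ≤ w a * α / ∑ x ∈ I, w x := by
          apply div_le_div_of_nonneg_left hnum hpos hsumle
      _ = (w a / ∑ x ∈ I, w x) * α := by ring
end

section
/- The closed testing procedure whose local test for each nonempty I ⊆ {1,…,m} rejects H_I iff p_i ≤ (w_i/∑_{j∈I} w_j)·α for some i ∈ I (the weighted Bonferroni test) is equivalent to WHP: for every index i ∈ {1,…,m}, the closed testing procedure rejects H_i if and only if WHP rejects H_i. -/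
open Finset

/-- WHP (weighted Bonferroni) local test for the intersection hypothesis `H_I`:
rejects iff `p i ≤ (w i / ∑_{j∈I} w j) * α` for some `i ∈ I`. -/
def whpLocal (m : ℕ) (p w : Fin m → ℝ) (α : ℝ) (I : Finset (Fin m)) : Prop :=
  ∃ i ∈ I, p i ≤ (w i / ∑ j ∈ I, w j) * α

/-- the closed testing procedure with weighted Bonferroni local tests is
equivalent to WHP: for every index `i`, the CTP rejects `H_i` (i.e. every nonempty `I`
containing `i` is locally rejected) iff WHP rejects `H_i`. -/
theorem ctp_whpLocal_iff_whp (m : ℕ) (hm : 1 ≤ m) (p w : Fin m → ℝ) (α : ℝ)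
    (hp : ∀ i, p i ∈ Set.Icc (0 : ℝ) 1) (hw : ∀ i, 0 < w i)
    (hα : α ∈ Set.Ioo (0 : ℝ) 1)
    (hptdist : Function.Injective fun i => p i / w i)
    (σ : Equiv.Perm (Fin m)) (hσ : Monotone fun j => p (σ j) / w (σ j))
    (i : Fin m) :
    (∀ I : Finset (Fin m), I.Nonempty → i ∈ I → whpLocal m p w α I) ↔
      whpRejects m p w α σ i := by
  constructor
  · intro h
    refine ⟨σ.symm i, by simp, ?_⟩
    intro j hj
    obtain ⟨a, haI, ha⟩ := h ((Finset.Ici j).image σ)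
      ⟨σ j, Finset.mem_image_of_mem σ (Finset.mem_Ici.mpr le_rfl)⟩
      (Finset.mem_image.mpr ⟨σ.symm i, Finset.mem_Ici.mpr hj, by simp⟩)
    obtain ⟨k, hk, rfl⟩ := Finset.mem_image.mp haI
    have hsum : ∑ b ∈ (Finset.Ici j).image σ, w b = ∑ k ∈ Finset.Ici j, w (σ k) :=
      Finset.sum_image (fun x _ y _ hxy => σ.injective hxy)
    rw [hsum] at ha
    have hS : 0 < ∑ k ∈ Finset.Ici j, w (σ k) :=
      Finset.sum_pos (fun k _ => hw _) ⟨j, Finset.mem_Ici.mpr le_rfl⟩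
    calc p (σ j) / w (σ j) ≤ p (σ k) / w (σ k) := hσ (Finset.mem_Ici.mp hk)
      _ ≤ α / ∑ k ∈ Finset.Ici j, w (σ k) := by
          rw [div_mul_eq_mul_div, le_div_iff₀ hS] at ha
          rw [div_le_div_iff₀ (hw _) hS]
          nlinarith [hw (σ k)]
  · rintro ⟨r, hri, hr⟩ I hI hiI
    have hJ : (I.image σ.symm).Nonempty := hI.image _
    set j := (I.image σ.symm).min' hJ with hjdef
    have hjJ : j ∈ I.image σ.symm := Finset.min'_mem _ hJ
    obtain ⟨a, haI, haj⟩ := Finset.mem_image.mp hjJ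
    have hjr : j ≤ r := by
      apply Finset.min'_le
      exact Finset.mem_image.mpr ⟨i, hiI, by rw [← hri]; simp⟩
    have key := hr j hjr
    have hσjI : σ j ∈ I := by rw [← haj]; simpa using haI
    refine ⟨σ j, hσjI, ?_⟩
    have hSI : 0 < ∑ b ∈ I, w b := Finset.sum_pos (fun _ _ => hw _) hI
    have hS : 0 < ∑ k ∈ Finset.Ici j, w (σ k) :=
      Finset.sum_pos (fun k _ => hw _) ⟨j, Finset.mem_Ici.mpr le_rfl⟩
    have hsub : ∑ b ∈ I, w b ≤ ∑ k ∈ Finset.Ici j, w (σ k) := by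
      have h1 : ∑ b ∈ I, w b = ∑ k ∈ I.image σ.symm, w (σ k) := by
        rw [Finset.sum_image (fun x _ y _ hxy => σ.symm.injective hxy)]
        simp
      rw [h1]
      apply Finset.sum_le_sum_of_subset_of_nonneg
      · intro k hk
        exact Finset.mem_Ici.mpr (Finset.min'_le _ _ hk)
      · exact fun k _ _ => (hw _).le
    have key2 : p (σ j) / w (σ j) ≤ α / ∑ b ∈ I, w b := by
      refine key.trans ?_
      exact div_le_div_of_nonneg_left hα.1.le hSI hsub
    rw [div_le_div_iff₀ (hw _) hSI] at key2
    rw [div_mul_eq_mul_div, le_div_iff₀ hSI]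
    nlinarith [hw (σ j)]
end

section
/- Let τ be the permutation sorting the raw p-values increasingly and, for 1 ≤ i ≤ m, let I⁺_(i) = {τ(i), τ(i+1), …, τ(m)} be the index set of the m−i+1 largest p-values. If I ⊆ {1,…,m} is a nonempty set containing τ(i) in which p_{τ(i)} is the smallest p-value (equivalently I ⊆ I⁺_(i) with τ(i) ∈ I), and the WAP local test rejects H_{I⁺_(i)}, then the WAP local test rejects H_I. -/
open Finset

/-- let `τ` sort the raw p-values increasingly and let
`I⁺_(i) = {τ i, τ (i+1), …, τ (m-1)}` be the index set of the largest p-values. If `I` is a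
nonempty set containing `τ i` in which `p (τ i)` is the smallest p-value, and the WAP local
test rejects `H_{I⁺_(i)}`, then the WAP local test rejects `H_I`. -/
theorem wapLocal_step (m : ℕ) (hm : 1 ≤ m) (p w : Fin m → ℝ) (α : ℝ)
    (hp : ∀ i, p i ∈ Set.Icc (0 : ℝ) 1) (hw : ∀ i, 0 < w i)
    (hα : α ∈ Set.Ioo (0 : ℝ) 1)
    (hpdist : Function.Injective p)
    (τ : Equiv.Perm (Fin m)) (hτ : Monotone fun j => p (τ j))
    (i : Fin m) (I : Finset (Fin m)) (hI : I.Nonempty)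
    (hiI : τ i ∈ I) (hmin : ∀ j ∈ I, p (τ i) ≤ p j)
    (hplus : wapLocal m p w α ((Finset.Ici i).image fun k => τ k)) :
    wapLocal m p w α I := by
  obtain ⟨iI, hiImem, hiImin, hle⟩ := hplus
  -- iI = τ i since both attain the minimum over I⁺ and p is injective
  have hτiMem : τ i ∈ (Finset.Ici i).image fun k => τ k :=
    Finset.mem_image.2 ⟨i, Finset.mem_Ici.2 le_rfl, rfl⟩
  obtain ⟨k, hk, hkE⟩ := Finset.mem_image.1 hiImem
  have h1 : p (τ i) ≤ p iI := by
    rw [← hkE]; exact hτ (Finset.mem_Ici.1 hk)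
  have h2 : p iI ≤ p (τ i) := hiImin _ hτiMem
  have hEq : iI = τ i := hpdist (le_antisymm h2 h1)
  subst hEq
  -- I ⊆ I⁺
  have hsub : I ⊆ (Finset.Ici i).image fun k => τ k := by
    intro j hj
    refine Finset.mem_image.2 ⟨τ.symm j, Finset.mem_Ici.2 ?_, τ.apply_symm_apply j⟩
    by_contra h
    have hlt : τ.symm j < i := lt_of_not_ge h
    have : p (τ (τ.symm j)) ≤ p (τ i) := hτ hlt.le
    rw [τ.apply_symm_apply] at this
    have : p j = p (τ i) := le_antisymm this (hmin j hj)
    have : j = τ i := hpdist this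
    exact h (le_of_eq (by rw [this, Equiv.symm_apply_apply]))
  have hsumpos : 0 < ∑ j ∈ I, w j :=
    Finset.sum_pos (fun j _ => hw j) hI
  have hsumle : ∑ j ∈ I, w j ≤ ∑ j ∈ (Finset.Ici i).image fun k => τ k, w j :=
    Finset.sum_le_sum_of_subset_of_nonneg hsub (fun j _ _ => (hw j).le)
  refine ⟨τ i, hiI, hmin, hle.trans ?_⟩
  have hdiv : w (τ i) / (∑ j ∈ (Finset.Ici i).image fun k => τ k, w j)
      ≤ w (τ i) / ∑ j ∈ I, w j :=
    div_le_div_of_nonneg_left (hw (τ i)).le hsumpos hsumle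
  exact mul_le_mul_of_nonneg_right hdiv hα.1.le
end

section
/- The closed testing procedure based on the WAP local tests is consonant: if a nonempty set I ⊆ {1,…,m} is such that the WAP local test rejects H_S for every set S with I ⊆ S ⊆ {1,…,m} (i.e., the CTP rejects the intersection hypothesis H_I), then there exists i₀ ∈ I such that the WAP local test rejects H_J for every nonempty J ⊆ {1,…,m} containing i₀ (i.e., the CTP rejects the elementary hypothesis H_{i₀}). -/
open Finset

/-- the closed testing procedure based on the WAP local tests is consonant:
if the WAP local test rejects `H_S` for every `S ⊇ I` (i.e. the CTP rejects the intersection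
hypothesis `H_I`), then some `i₀ ∈ I` has its elementary hypothesis rejected by the CTP,
i.e. the WAP local test rejects `H_J` for every nonempty `J` containing `i₀`. -/
theorem ctp_wap_consonant (m : ℕ) (hm : 1 ≤ m) (p w : Fin m → ℝ) (α : ℝ)
    (hp : ∀ i, p i ∈ Set.Icc (0 : ℝ) 1) (hw : ∀ i, 0 < w i)
    (hα : α ∈ Set.Ioo (0 : ℝ) 1)
    (hpdist : Function.Injective p)
    (I : Finset (Fin m)) (hI : I.Nonempty)
    (h : ∀ S : Finset (Fin m), I ⊆ S → wapLocal m p w α S) :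
    ∃ i₀ ∈ I, ∀ J : Finset (Fin m), J.Nonempty → i₀ ∈ J → wapLocal m p w α J := by
  obtain ⟨i₀, hi₀I, hi₀min⟩ := I.exists_min_image p hI
  refine ⟨i₀, hi₀I, ?_⟩
  intro J hJne hi₀J
  obtain ⟨iS, hiS, hiSmin, hiSle⟩ := h (J ∪ I) (subset_union_right)
  have hiSJ : iS ∈ J := by
    rcases mem_union.mp hiS with hJ | hI'
    · exact hJ
    · have h1 : p iS ≤ p i₀ := hiSmin i₀ (mem_union.mpr (Or.inl hi₀J))
      have h2 : p i₀ ≤ p iS := hi₀min iS hI'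
      have : iS = i₀ := hpdist (le_antisymm h1 h2)
      rwa [this]
  refine ⟨iS, hiSJ, fun j hj => hiSmin j (mem_union.mpr (Or.inl hj)), ?_⟩
  refine hiSle.trans (mul_le_mul_of_nonneg_right ?_ hα.1.le)
  have hJpos : 0 < ∑ j ∈ J, w j := Finset.sum_pos (fun j _ => hw j) hJne
  have hle : ∑ j ∈ J, w j ≤ ∑ j ∈ J ∪ I, w j :=
    Finset.sum_le_sum_of_subset_of_nonneg subset_union_left (fun j _ _ => (hw j).le)
  exact div_le_div_of_nonneg_left (hw iS).le hJpos hle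
end

section
/- If the weights do not alter the ordering of the p-values, i.e., the permutation τ sorting the raw p-values also sorts the weighted p-values (p_{τ(1)}/w_{τ(1)} ≤ … ≤ p_{τ(m)}/w_{τ(m)}), then WHP and WAP coincide: for every index i ∈ {1,…,m}, WHP rejects H_i if and only if WAP rejects H_i. -/
open Finset

theorem Equiv.Perm.eq_of_monotone_comp {α β : Type*} [LinearOrder α] [WellFoundedLT α]
    [LinearOrder β] {f : α → β} (hf : Function.Injective f) {σ τ : Equiv.Perm α}
    (hσ : Monotone (f ∘ σ)) (hτ : Monotone (f ∘ τ)) : σ = τ := by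
  have hσ' := hσ.strictMono_of_injective (hf.comp σ.injective)
  have hτ' := hτ.strictMono_of_injective (hf.comp τ.injective)
  have hrange : Set.range (f ∘ σ) = Set.range (f ∘ τ) := by
    rw [Set.range_comp, Set.range_comp, σ.surjective.range_eq, τ.surjective.range_eq]
  ext j : 1
  exact hf (congrFun ((hσ'.range_inj hτ').mp hrange) j)

theorem whpRejects_iff_wapRejects {m : ℕ} {p w : Fin m → ℝ} (hw : ∀ i, 0 < w i) (α : ℝ)
    (σ : Equiv.Perm (Fin m)) (i : Fin m) :
    whpRejects m p w α σ i ↔ wapRejects m p w α σ i := by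
  unfold whpRejects wapRejects
  refine exists_congr fun _ ↦ and_congr_right fun _ ↦ forall₂_congr fun _ _ ↦ ?_
  rw [div_le_iff₀ (hw _), mul_div_assoc, mul_comm]

theorem whp_eq_wap_of_same_order_general (m : ℕ) (p w : Fin m → ℝ) (α : ℝ)
    (hw : ∀ i, 0 < w i)
    (hptdist : Function.Injective fun i => p i / w i)
    (σ : Equiv.Perm (Fin m)) (hσ : Monotone fun j => p (σ j) / w (σ j))
    (τ : Equiv.Perm (Fin m))
    (hτw : Monotone fun j => p (τ j) / w (τ j))
    (i : Fin m) :
    whpRejects m p w α σ i ↔ wapRejects m p w α τ i := by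
  obtain rfl : σ = τ := Equiv.Perm.eq_of_monotone_comp hptdist hσ hτw
  exact whpRejects_iff_wapRejects hw α σ i

/-- if the permutation `τ` sorting the raw p-values also sorts the weighted
p-values (i.e. the weights do not alter the ordering of the p-values), then WHP and WAP
coincide: for every index `i`, WHP rejects `H_i` iff WAP rejects `H_i`. -/
theorem whp_eq_wap_of_same_order (m : ℕ) (hm : 1 ≤ m) (p w : Fin m → ℝ) (α : ℝ)
    (hp : ∀ i, p i ∈ Set.Icc (0 : ℝ) 1) (hw : ∀ i, 0 < w i)
    (hα : α ∈ Set.Ioo (0 : ℝ) 1)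
    (hpdist : Function.Injective p)
    (hptdist : Function.Injective fun i => p i / w i)
    (σ : Equiv.Perm (Fin m)) (hσ : Monotone fun j => p (σ j) / w (σ j))
    (τ : Equiv.Perm (Fin m)) (hτ : Monotone fun j => p (τ j))
    (hτw : Monotone fun j => p (τ j) / w (τ j))
    (i : Fin m) :
    whpRejects m p w α σ i ↔ wapRejects m p w α τ i :=
  whp_eq_wap_of_same_order_general m p w α hw hptdist σ hσ τ hτw i
end

section
/- The graphical algorithm for WHP is equivalent to WHP: the sequential algorithm that initializes I = {1,…,m}, α_i = w_i·α/∑_{k=1}^m w_k and g_{ab} = w_b/∑_{r∈I∖{a}} w_r for distinct a,b ∈ I, and then repeatedly selects j = argmin_{i∈I} p̃_i, rejects H_j if p_j ≤ α_j (otherwise stops), and upon rejection updates I ← I∖{j}, α_l ← α_l + α_j·g_{jl} for l ∈ I, and g_{lk} ← (g_{lk} + g_{lj}·g_{jk})/(1 − g_{lj}·g_{jl}) for distinct l,k ∈ I, rejects exactly the same set of hypotheses as the weighted Holm procedure (WHP). -/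
open Finset
open scoped Classical

/-- One run of the graphical algorithm (with fuel `n`): given the current index set `I`,
local significance levels `a`, and transition coefficients `g`, it selects the index
`j ∈ I` minimizing the weighted p-value `p j / w j`; if `p j ≤ a j` it rejects `H_j`,
updates `I ← I ∖ {j}`, `a l ← a l + a j * g j l` for `l ∈ I`, and
`g l k ← (g l k + g l j * g j k)/(1 - g l j * g j l)` for distinct `l, k ∈ I`,
and continues; otherwise it stops. It returns the set of rejected indices. -/
noncomputable def graphReject (m : ℕ) (p w : Fin m → ℝ) :
    ℕ → Finset (Fin m) → (Fin m → ℝ) → (Fin m → Fin m → ℝ) → Finset (Fin m)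
  | 0, _, _, _ => ∅
  | n + 1, I, a, g =>
      if h : ∃ j ∈ I, (∀ i ∈ I, p j / w j ≤ p i / w i) ∧ p j ≤ a j then
        insert h.choose (graphReject m p w n (I.erase h.choose)
          (fun l => if l ∈ I.erase h.choose then a l + a h.choose * g h.choose l else a l)
          (fun l k => if l ∈ I.erase h.choose ∧ k ∈ I.erase h.choose ∧ l ≠ k then
              (g l k + g l h.choose * g h.choose k) / (1 - g l h.choose * g h.choose l)
            else g l k))
      else ∅

private lemma graphReject_spec (m : ℕ) (p w : Fin m → ℝ) (α : ℝ)
    (hw : ∀ i, 0 < w i) (hα : 0 < α)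
    (hptdist : Function.Injective fun i => p i / w i) :
    ∀ (n : ℕ) (I : Finset (Fin m)) (a : Fin m → ℝ) (g : Fin m → Fin m → ℝ),
      I.card ≤ n →
      (∀ l ∈ I, a l = w l * α / ∑ k ∈ I, w k) →
      (∀ l ∈ I, ∀ k ∈ I, l ≠ k → g l k = w k / ∑ r ∈ I.erase l, w r) →
      ∀ i, (i ∈ graphReject m p w n I a g ↔
        i ∈ I ∧ ∀ j ∈ I, p j / w j ≤ p i / w i →
          p j / w j ≤ α / ∑ k ∈ I.filter (fun k => p j / w j ≤ p k / w k), w k) := by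
  intro n
  induction n with
  | zero =>
    intro I a g hcard _ _ i
    have hI : I = ∅ := card_eq_zero.mp (Nat.le_zero.mp hcard)
    subst hI
    simp [graphReject]
  | succ n ih =>
    intro I a g hcard ha hg i
    rw [graphReject]
    by_cases h : ∃ j ∈ I, (∀ i ∈ I, p j / w j ≤ p i / w i) ∧ p j ≤ a j
    · rw [dif_pos h]
      set j := h.choose with hj
      obtain ⟨hjI, hjmin, hjrej⟩ := h.choose_spec
      -- basic facts
      have hS : (0:ℝ) < ∑ k ∈ I, w k := Finset.sum_pos (fun k _ => hw k) ⟨j, hjI⟩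
      have hstrict : ∀ k ∈ I, k ≠ j → p j / w j < p k / w k := by
        intro k hk hkj
        refine lt_of_le_of_ne (hjmin k hk) ?_
        intro e
        exact hkj (hptdist e.symm)
      -- the test for j over I holds
      have hfilterj : I.filter (fun k => p j / w j ≤ p k / w k) = I :=
        Finset.filter_true_of_mem (fun k hk => hjmin k hk)
      have htestj : p j / w j ≤ α / ∑ k ∈ I, w k := by
        rw [ha j hjI, le_div_iff₀ hS] at hjrej
        rw [div_le_div_iff₀ (hw j) hS]
        linarith [hjrej, mul_comm (w j) α]
      -- filter over erase equals filter over I, for j' ≠ j in I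
      have hfilter' : ∀ j' ∈ I.erase j,
          (I.erase j).filter (fun k => p j' / w j' ≤ p k / w k)
            = I.filter (fun k => p j' / w j' ≤ p k / w k) := by
        intro j' hj'
        rw [Finset.filter_erase]
        apply Finset.erase_eq_of_notMem
        simp only [Finset.mem_filter, not_and]
        intro _
        exact not_le.mpr (hstrict j' (Finset.mem_of_mem_erase hj') (Finset.ne_of_mem_erase hj'))
      -- invariants for the recursive call
      have hsumerase : ∑ k ∈ I.erase j, w k = (∑ k ∈ I, w k) - w j := by
        rw [← Finset.sum_erase_add I w hjI]; ring
      have ha' : ∀ l ∈ I.erase j,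
          (if l ∈ I.erase j then a l + a j * g j l else a l)
            = w l * α / ∑ k ∈ I.erase j, w k := by
        intro l hl
        rw [if_pos hl]
        have hlI := Finset.mem_of_mem_erase hl
        have hlj : l ≠ j := Finset.ne_of_mem_erase hl
        have hT : (0:ℝ) < ∑ r ∈ I.erase j, w r :=
          Finset.sum_pos (fun k _ => hw k) ⟨l, by simpa [Finset.mem_erase] using ⟨hlj, hlI⟩⟩
        rw [ha l hlI, ha j hjI, hg j hjI l hlI (Ne.symm hlj)]
        rw [hsumerase] at hT ⊢
        field_simp
        ring
      have hg' : ∀ l ∈ I.erase j, ∀ k ∈ I.erase j, l ≠ k →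
          (if l ∈ I.erase j ∧ k ∈ I.erase j ∧ l ≠ k then
              (g l k + g l j * g j k) / (1 - g l j * g j l)
            else g l k)
            = w k / ∑ r ∈ (I.erase j).erase l, w r := by
        intro l hl k hk hlk
        rw [if_pos ⟨hl, hk, hlk⟩]
        have hlI := Finset.mem_of_mem_erase hl
        have hkI := Finset.mem_of_mem_erase hk
        have hlj : l ≠ j := Finset.ne_of_mem_erase hl
        have hkj : k ≠ j := Finset.ne_of_mem_erase hk
        set C := ∑ r ∈ (I.erase j).erase l, w r with hC
        have hkC : k ∈ (I.erase j).erase l := Finset.mem_erase.mpr ⟨Ne.symm hlk, hk⟩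
        have hCpos : (0:ℝ) < C := Finset.sum_pos (fun r _ => hw r) ⟨k, hkC⟩
        have hA : ∑ r ∈ I.erase l, w r = w j + C := by
          rw [hC, Finset.erase_right_comm, ← Finset.sum_erase_add (I.erase l) w
            (Finset.mem_erase.mpr ⟨Ne.symm hlj, hjI⟩)]
          ring
        have hB : ∑ r ∈ I.erase j, w r = w l + C := by
          rw [hC, ← Finset.sum_erase_add (I.erase j) w hl]; ring
        rw [hg l hlI k hkI hlk, hg l hlI j hjI hlj, hg j hjI k hkI (Ne.symm hkj),
          hg j hjI l hlI (Ne.symm hlj), hA, hB]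
        have h1 : (0:ℝ) < w j + C := by have := hw j; linarith
        have h2 : (0:ℝ) < w l + C := by have := hw l; linarith
        have hS' : (0:ℝ) < w j + w l + C := by have := hw j; have := hw l; linarith
        have e1 : w k / (w j + C) + w j / (w j + C) * (w k / (w l + C))
            = w k * (w j + w l + C) / ((w j + C) * (w l + C)) := by
          field_simp
          ring
        have e2 : 1 - w j / (w j + C) * (w l / (w l + C))
            = C * (w j + w l + C) / ((w j + C) * (w l + C)) := by
          field_simp
          ring
        rw [e1, e2, div_div_div_comm, div_self (ne_of_gt (mul_pos h1 h2)), div_one,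
          mul_comm (w k) (w j + w l + C), mul_comm C (w j + w l + C),
          mul_div_mul_left _ _ (ne_of_gt hS')]
      have hcard' : (I.erase j).card ≤ n := by
        have h1 : (I.erase j).card = I.card - 1 := Finset.card_erase_of_mem hjI
        omega
      rw [Finset.mem_insert, ih (I.erase j) _ _ hcard' ha' hg' i]
      constructor
      · rintro (rfl | ⟨hiI', hP⟩)
        · refine ⟨hjI, fun j' hj' hle => ?_⟩
          have : j' = j := by
            by_contra hne
            exact absurd hle (not_le.mpr (hstrict j' hj' hne))
          subst this
          rw [hfilterj]
          exact htestj
        · refine ⟨Finset.mem_of_mem_erase hiI', fun j' hj' hle => ?_⟩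
          by_cases hje : j' = j
          · subst hje; rw [hfilterj]; exact htestj
          · have hj'e : j' ∈ I.erase j := Finset.mem_erase.mpr ⟨hje, hj'⟩
            have := hP j' hj'e hle
            rwa [hfilter' j' hj'e] at this
      · rintro ⟨hiI, hP⟩
        by_cases hie : i = j
        · exact Or.inl hie
        · refine Or.inr ⟨Finset.mem_erase.mpr ⟨hie, hiI⟩, fun j' hj' hle => ?_⟩
          rw [hfilter' j' hj']
          exact hP j' (Finset.mem_of_mem_erase hj') hle
    · rw [dif_neg h]
      simp only [Finset.notMem_empty, false_iff, not_and, not_forall]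
      intro hiI
      obtain ⟨j, hjI, hjmin⟩ := Finset.exists_min_image I (fun k => p k / w k) ⟨i, hiI⟩
      push_neg at h
      have hrej := h j hjI hjmin
      have hS : (0:ℝ) < ∑ k ∈ I, w k := Finset.sum_pos (fun k _ => hw k) ⟨j, hjI⟩
      have hrej2 : a j < p j := hrej
      rw [ha j hjI, div_lt_iff₀ hS] at hrej2
      refine ⟨j, hjI, hjmin i hiI, ?_⟩
      rw [Finset.filter_true_of_mem (fun k hk => hjmin k hk)]
      rw [not_le, div_lt_div_iff₀ hS (hw j)]
      linarith [hrej2, mul_comm (w j) α]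

/-- the graphical algorithm initialized with `I = {1,…,m}`,
`α_i = w i * α / ∑_k w k`, and `g a b = w b / ∑_{r ≠ a} w r` rejects exactly the same
hypotheses as the weighted Holm procedure (WHP). -/
theorem graphical_eq_whp (m : ℕ) (hm : 1 ≤ m) (p w : Fin m → ℝ) (α : ℝ)
    (hp : ∀ i, p i ∈ Set.Icc (0 : ℝ) 1) (hw : ∀ i, 0 < w i)
    (hα : α ∈ Set.Ioo (0 : ℝ) 1)
    (hptdist : Function.Injective fun i => p i / w i)
    (σ : Equiv.Perm (Fin m)) (hσ : Monotone fun j => p (σ j) / w (σ j))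
    (i : Fin m) :
    i ∈ graphReject m p w m Finset.univ
        (fun l => w l * α / ∑ k, w k)
        (fun a b => w b / ∑ r ∈ Finset.univ.erase a, w r) ↔
      ∃ r : Fin m, σ r = i ∧
        ∀ j ≤ r, p (σ j) / w (σ j) ≤ α / ∑ k ∈ Finset.Ici j, w (σ k) := by
  have hsm : StrictMono (fun j => p (σ j) / w (σ j)) :=
    hσ.strictMono_of_injective (hptdist.comp σ.injective)
  have hW : ∀ j' : Fin m,
      ∑ k ∈ Finset.univ.filter (fun k => p (σ j') / w (σ j') ≤ p k / w k), w k
        = ∑ k ∈ Finset.Ici j', w (σ k) := by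
    intro j'
    rw [Finset.sum_filter]
    rw [← Equiv.sum_comp σ (fun k => if p (σ j') / w (σ j') ≤ p k / w k then w k else 0)]
    have : Finset.Ici j' = Finset.univ.filter (fun k => j' ≤ k) := by
      ext k; simp
    rw [this, Finset.sum_filter]
    refine Finset.sum_congr rfl fun k _ => ?_
    congr 1
    simp only [eq_iff_iff]
    exact hsm.le_iff_le
  rw [graphReject_spec m p w α hw hα.1 hptdist m Finset.univ _ _
    (le_of_eq (Finset.card_univ.trans (Fintype.card_fin m)))
    (fun l _ => rfl) (fun l _ k _ _ => rfl) i]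
  constructor
  · rintro ⟨-, H⟩
    refine ⟨σ.symm i, σ.apply_symm_apply i, fun j hj => ?_⟩
    have hle : p (σ j) / w (σ j) ≤ p i / w i := by
      have := hsm.monotone hj
      rwa [σ.apply_symm_apply] at this
    have := H (σ j) (Finset.mem_univ _) hle
    rwa [hW j] at this
  · rintro ⟨r, rfl, H⟩
    refine ⟨Finset.mem_univ _, fun j _ hle => ?_⟩
    have hj : σ.symm j ≤ r := by
      rw [← hsm.le_iff_le]
      simpa [σ.apply_symm_apply] using hle
    have := H (σ.symm j) hj
    rw [← σ.apply_symm_apply j, hW]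
    exact this
end

section
/- Weight-sum comparison lemma: let σ sort the weighted p-values increasingly and τ sort the raw p-values increasingly. For r ∈ {1,…,m}, define s_r = min{ l ∈ {1,…,m} : p̃_{σ(r)} ≤ p_{τ(l)}/w_{τ(l)} }. Then s_r is well defined, s_r ≤ the raw rank of the hypothesis σ(r), and ∑_{k=r}^m w_{σ(k)} ≤ ∑_{ℓ=s_r}^m w_{τ(ℓ)}. -/
open Finset

/-- weight-sum comparison lemma: let `σ` sort the weighted p-values
increasingly and `τ` sort the raw p-values increasingly, and fix a rank `r` with raw rank
`i` of the same hypothesis (`τ i = σ r`). Then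
`s_r = min { l : p̃ (σ r) ≤ p (τ l) / w (τ l) }` is well defined (the minimum exists),
satisfies `s_r ≤ i`, and `∑_{k=r}^{m} w (σ k) ≤ ∑_{ℓ=s_r}^{m} w (τ ℓ)`. -/
theorem weight_sum_comparison (m : ℕ) (hm : 1 ≤ m) (p w : Fin m → ℝ)
    (hp : ∀ i, p i ∈ Set.Icc (0 : ℝ) 1) (hw : ∀ i, 0 < w i)
    (hpdist : Function.Injective p)
    (hptdist : Function.Injective fun i => p i / w i)
    (σ : Equiv.Perm (Fin m)) (hσ : Monotone fun j => p (σ j) / w (σ j))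
    (τ : Equiv.Perm (Fin m)) (hτ : Monotone fun j => p (τ j))
    (r i : Fin m) (hri : τ i = σ r) :
    ∃ s : Fin m,
      p (σ r) / w (σ r) ≤ p (τ s) / w (τ s) ∧
      (∀ l : Fin m, p (σ r) / w (σ r) ≤ p (τ l) / w (τ l) → s ≤ l) ∧
      s ≤ i ∧
      ∑ k ∈ Finset.Ici r, w (σ k) ≤ ∑ l ∈ Finset.Ici s, w (τ l) := by
  classical
  set T : Finset (Fin m) :=
    Finset.univ.filter fun l : Fin m => p (σ r) / w (σ r) ≤ p (τ l) / w (τ l) with hT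
  have hmem : i ∈ T := by simp [hT, hri]
  have hTne : T.Nonempty := ⟨i, hmem⟩
  set s := T.min' hTne with hs
  have hsmem : s ∈ T := T.min'_mem hTne
  have hsprop : p (σ r) / w (σ r) ≤ p (τ s) / w (τ s) := by
    simpa [hT] using hsmem
  refine ⟨s, hsprop, ?_, T.min'_le i hmem, ?_⟩
  · intro l hl
    exact T.min'_le l (by simp [hT, hl])
  · have hsub : (Finset.Ici r).image σ ⊆ (Finset.Ici s).image τ := by
      intro x hx
      obtain ⟨k, hk, rfl⟩ := Finset.mem_image.mp hx
      refine Finset.mem_image.mpr ⟨τ.symm (σ k), ?_, by simp⟩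
      rw [Finset.mem_Ici] at hk ⊢
      apply T.min'_le
      simp only [hT, Finset.mem_filter, Finset.mem_univ, true_and, Equiv.apply_symm_apply]
      exact hσ hk
    calc ∑ k ∈ Finset.Ici r, w (σ k)
        = ∑ j ∈ (Finset.Ici r).image σ, w j := by
          rw [Finset.sum_image (fun a _ b _ h => σ.injective h)]
      _ ≤ ∑ j ∈ (Finset.Ici s).image τ, w j :=
          Finset.sum_le_sum_of_subset_of_nonneg hsub (fun j _ _ => (hw j).le)
      _ = ∑ l ∈ Finset.Ici s, w (τ l) := by
          rw [Finset.sum_image (fun a _ b _ h => τ.injective h)]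
end

section
/- The adjusted weighted p-values implement WHP: for every i ∈ {1,…,m}, the weighted Holm procedure rejects H_{σ(i)} if and only if p̃^{adj}_{(i)} ≤ α. -/
open Finset

/-- Step-down adjustment of a sequence of candidate values:
`adjSeq c 0 = min (c 0) 1` and `adjSeq c (i+1) = max (c (i+1)) (adjSeq c i)`. -/
noncomputable def adjSeq (c : ℕ → ℝ) : ℕ → ℝ
  | 0 => min (c 0) 1
  | n + 1 => max (c (n + 1)) (adjSeq c n)

/-- Candidate adjusted value at (0-based) rank `n` for the ordering permutation `π`:
`(p (π n) / w (π n)) * ∑_{k=n}^{m-1} w (π k)`. -/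
noncomputable def adjCand (m : ℕ) (p w : Fin m → ℝ) (π : Equiv.Perm (Fin m)) (n : ℕ) : ℝ :=
  if h : n < m then
    (p (π ⟨n, h⟩) / w (π ⟨n, h⟩)) * ∑ k ∈ Finset.Ici (⟨n, h⟩ : Fin m), w (π k)
  else 0

/-- WHP adjusted weighted p-value `p̃ᵃᵈʲ_(i)` for the hypothesis of rank `i` in the
ordering `σ` of weighted p-values. -/
noncomputable def adjP (m : ℕ) (p w : Fin m → ℝ) (π : Equiv.Perm (Fin m)) (i : Fin m) : ℝ :=
  adjSeq (adjCand m p w π) i.val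

lemma adjSeq_le_iff (c : ℕ → ℝ) (α : ℝ) :
    ∀ n, adjSeq c n ≤ α ↔ (min (c 0) 1 ≤ α ∧ ∀ j, 0 < j → j ≤ n → c j ≤ α)
  | 0 => by
    simp only [adjSeq]
    constructor
    · intro h; exact ⟨h, fun j hj hj0 => absurd hj0 (by omega)⟩
    · exact fun h => h.1
  | n + 1 => by
    simp only [adjSeq, max_le_iff, adjSeq_le_iff c α n]
    constructor
    · rintro ⟨h1, h2, h3⟩
      refine ⟨h2, fun j hj hjn => ?_⟩
      rcases Nat.lt_or_ge j (n+1) with h | h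
      · exact h3 j hj (by omega)
      · have : j = n + 1 := by omega
        rw [this]; exact h1
    · rintro ⟨h1, h2⟩
      exact ⟨h2 (n+1) (by omega) le_rfl, h1, fun j hj hjn => h2 j hj (by omega)⟩

/-- the adjusted weighted p-values implement WHP: for every `i`, WHP rejects
`H_{σ i}` (i.e. `p̃_{σ j} ≤ α / ∑_{k=j}^m w (σ k)` for all `j ≤ i`) iff `p̃ᵃᵈʲ_(i) ≤ α`. -/
theorem whp_iff_adj_le_alpha (m : ℕ) (hm : 1 ≤ m) (p w : Fin m → ℝ) (α : ℝ)
    (hp : ∀ i, p i ∈ Set.Icc (0 : ℝ) 1) (hw : ∀ i, 0 < w i)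
    (hα : α ∈ Set.Ioo (0 : ℝ) 1)
    (hptdist : Function.Injective fun i => p i / w i)
    (σ : Equiv.Perm (Fin m)) (hσ : Monotone fun j => p (σ j) / w (σ j))
    (i : Fin m) :
    (∀ j ≤ i, p (σ j) / w (σ j) ≤ α / ∑ k ∈ Finset.Ici j, w (σ k)) ↔
      adjP m p w σ i ≤ α := by
  have hcand : ∀ j : Fin m, adjCand m p w σ j.val
      = (p (σ j) / w (σ j)) * ∑ k ∈ Finset.Ici j, w (σ k) := by
    intro j
    simp [adjCand, j.isLt]
  have hS : ∀ j : Fin m, 0 < ∑ k ∈ Finset.Ici j, w (σ k) :=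
    fun j => Finset.sum_pos (fun k _ => hw _) ⟨j, Finset.mem_Ici.mpr le_rfl⟩
  have hiff : ∀ j : Fin m,
      ((p (σ j) / w (σ j) ≤ α / ∑ k ∈ Finset.Ici j, w (σ k)) ↔
        adjCand m p w σ j.val ≤ α) := by
    intro j
    rw [hcand, le_div_iff₀ (hS j)]
  have h0m : (0 : ℕ) < m := hm
  unfold adjP
  rw [adjSeq_le_iff]
  constructor
  · intro H
    refine ⟨?_, fun j hj0 hji => ?_⟩
    · have h0i : (⟨0, h0m⟩ : Fin m) ≤ i := by
        simp [Fin.le_def]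
      have := (hiff ⟨0, h0m⟩).mp (H ⟨0, h0m⟩ h0i)
      exact le_trans (min_le_left _ _) this
    · have hjm : j < m := lt_of_le_of_lt hji i.isLt
      exact (hiff ⟨j, hjm⟩).mp (H ⟨j, hjm⟩ (by simpa [Fin.le_def] using hji))
  · rintro ⟨h0, hrest⟩ j hji
    rcases Nat.eq_zero_or_pos j.val with hz | hpos
    · apply (hiff j).mpr
      rw [hz]
      rcases min_le_iff.mp h0 with h | h
      · exact h
      · exact absurd (lt_of_lt_of_le hα.2 h) (lt_irrefl _)
    · exact (hiff j).mpr (hrest j.val hpos hji)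
end

section
/- Sharpness of WHP (optimality): for every m₀ ≥ 1, every choice of positive weights w_1,…,w_{m₀} > 0, and every α ∈ (0,1), there exists a probability measure μ on ℝ^{m₀} (equivalently, a random vector (P_1,…,P_{m₀}) on some probability space) such that each coordinate P_i is marginally uniformly distributed on [0,1] and Pr( min_{1≤i≤m₀} P_i/w_i ≤ α/∑_{k=1}^{m₀} w_k ) = α. In particular, the familywise error rate of the weighted Holm procedure equals exactly α under this configuration, so no critical value of WHP can be increased without violating FWER control. -/
open Finset MeasureTheory


lemma rot_map_aux (a : ℝ) (ha : 0 ≤ a) (ha1 : a < 1) :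
    (volume.restrict (Set.Icc (0:ℝ) 1)).map
      (fun u => if u < a then u + (1 - a) else u - a) = volume.restrict (Set.Icc (0:ℝ) 1) := by
  have hmeas : Measurable (fun u : ℝ => if u < a then u + (1 - a) else u - a) := by
    exact Measurable.ite (measurableSet_lt measurable_id measurable_const)
      (measurable_id.add_const _) (measurable_id.sub_const _)
  ext s hs
  rw [Measure.map_apply hmeas hs, Measure.restrict_apply hs,
    Measure.restrict_apply (hmeas hs)]
  set f := fun u : ℝ => if u < a then u + (1 - a) else u - a with hf
  have hdecomp : f ⁻¹' s ∩ Set.Icc 0 1 =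
      ((· + (1 - a)) ⁻¹' (s ∩ Set.Ico (1 - a) 1)) ∪ ((· + (-a)) ⁻¹' (s ∩ Set.Icc 0 (1 - a))) := by
    ext u
    simp only [Set.mem_inter_iff, Set.mem_preimage, Set.mem_union, Set.mem_Icc, Set.mem_Ico, hf,
      Set.mem_preimage]
    by_cases h : u < a
    · simp only [h, if_pos]
      constructor
      · rintro ⟨hu, h0, h1⟩; left; exact ⟨hu, by linarith, by linarith⟩
      · rintro (⟨hu, h0, h1⟩ | ⟨hu, h0, h1⟩)
        · exact ⟨hu, by linarith, by linarith⟩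
        · exact ⟨by linarith [hu]; , by linarith, by linarith⟩
    · simp only [h, if_neg, not_false_iff]
      push_neg at h
      constructor
      · rintro ⟨hu, h0, h1⟩; right
        exact ⟨by simpa [sub_eq_add_neg] using hu, by linarith, by linarith⟩
      · rintro (⟨hu, h0, h1⟩ | ⟨hu, h0, h1⟩)
        · exact absurd h1 (by linarith)
        · exact ⟨by simpa [sub_eq_add_neg] using hu, by linarith, by linarith⟩
  rw [hdecomp]
  have hdisj : Disjoint ((· + (1 - a)) ⁻¹' (s ∩ Set.Ico (1 - a) 1))
      ((· + (-a)) ⁻¹' (s ∩ Set.Icc 0 (1 - a))) := by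
    rw [Set.disjoint_left]
    intro u hu hv
    simp only [Set.mem_preimage, Set.mem_inter_iff, Set.mem_Ico, Set.mem_Icc] at hu hv
    linarith [hu.2.1, hv.2.2]
  have hm2 : MeasurableSet ((· + (-a)) ⁻¹' (s ∩ Set.Icc 0 (1 - a))) :=
    (measurable_add_const _) (hs.inter measurableSet_Icc)
  rw [measure_union hdisj hm2, measure_preimage_add_right, measure_preimage_add_right]
  -- now: volume (s ∩ Ico (1-a) 1) + volume (s ∩ Icc 0 (1-a)) = volume (s ∩ Icc 0 1)
  have h1 : volume (s ∩ Set.Icc 0 (1 - a)) = volume (s ∩ Set.Ico 0 (1 - a)) := by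
    apply le_antisymm
    · calc volume (s ∩ Set.Icc 0 (1 - a))
          ≤ volume ((s ∩ Set.Ico 0 (1 - a)) ∪ {1 - a}) := by
            apply measure_mono; rintro x ⟨hx, h0, h1⟩
            rcases eq_or_lt_of_le h1 with h | h
            · right; simp [h]
            · left; exact ⟨hx, h0, h⟩
        _ ≤ volume (s ∩ Set.Ico 0 (1 - a)) + volume ({1 - a} : Set ℝ) := measure_union_le _ _
        _ = volume (s ∩ Set.Ico 0 (1 - a)) := by simp
    · exact measure_mono (Set.inter_subset_inter_right _ Set.Ico_subset_Icc_self)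
  have h2 : volume (s ∩ Set.Icc 0 1) = volume (s ∩ Set.Ico 0 1) := by
    apply le_antisymm
    · calc volume (s ∩ Set.Icc 0 1)
          ≤ volume ((s ∩ Set.Ico 0 1) ∪ {1}) := by
            apply measure_mono; rintro x ⟨hx, h0, h1⟩
            rcases eq_or_lt_of_le h1 with h | h
            · right; simp [h]
            · left; exact ⟨hx, h0, h⟩
        _ ≤ volume (s ∩ Set.Ico 0 1) + volume ({1} : Set ℝ) := measure_union_le _ _
        _ = volume (s ∩ Set.Ico 0 1) := by simp
    · exact measure_mono (Set.inter_subset_inter_right _ Set.Ico_subset_Icc_self)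
  rw [h1, h2]
  rw [← measure_union ?_ ?_]
  · congr 1
    rw [← Set.inter_union_distrib_left]
    congr 1
    rw [Set.union_comm, Set.Ico_union_Ico_eq_Ico] <;> linarith
  · rw [Set.disjoint_left]
    rintro x ⟨hx, h0, h1⟩ ⟨hx', h0', h1'⟩
    linarith
  · exact hs.inter measurableSet_Ico

lemma whp_find_interval (c : ℕ → ℝ) (u : ℝ) (hc0 : c 0 = 0) (hu : 0 ≤ u) :
    ∀ m, u ≤ c (m + 1) → ∃ n ≤ m, c n ≤ u ∧ u ≤ c (n + 1) := by
  intro m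
  induction m with
  | zero => intro h; exact ⟨0, le_refl 0, by rw [hc0]; exact hu, h⟩
  | succ m ih =>
    intro h
    by_cases h' : u ≤ c (m + 1)
    · obtain ⟨n, hn, h1, h2⟩ := ih h'
      exact ⟨n, Nat.le_succ_of_le hn, h1, h2⟩
    · exact ⟨m + 1, le_refl _, le_of_not_ge h', h⟩


/-- sharpness / optimality of WHP: for every `m₀ ≥ 1`, positive weights
`w`, and `α ∈ (0,1)`, there is a random vector `(P i)_{i < m₀}` on some probability space
whose coordinates are marginally uniform on `[0,1]` and such that
`Pr( min_i P i / w i ≤ α / ∑ k w k ) = α`; i.e. the FWER of the weighted Holm procedure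
equals exactly `α` when all hypotheses are true nulls, so no critical value of WHP can be
increased without violating FWER control. -/
theorem whp_fwer_sharp (m₀ : ℕ) (hm : 1 ≤ m₀) (w : Fin m₀ → ℝ) (hw : ∀ i, 0 < w i)
    (α : ℝ) (hα : α ∈ Set.Ioo (0 : ℝ) 1) :
    ∃ (Ω : Type) (_ : MeasurableSpace Ω) (μ : Measure Ω) (_ : IsProbabilityMeasure μ)
      (P : Fin m₀ → Ω → ℝ),
      (∀ i, Measurable (P i)) ∧
      (∀ i, μ.map (P i) = volume.restrict (Set.Icc (0 : ℝ) 1)) ∧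
      μ {ω | ∃ i, P i ω / w i ≤ α / ∑ k, w k} = ENNReal.ofReal α := by
  obtain ⟨hα0, hα1⟩ := hα
  set T : ℝ := ∑ k, w k with hT
  have hT0 : 0 < T := Finset.sum_pos (fun i _ => hw i) (univ_nonempty_iff.mpr ⟨⟨0, hm⟩⟩)
  set w' : ℕ → ℝ := fun k => if h : k < m₀ then w ⟨k, h⟩ else 0 with hw'
  have hw'nonneg : ∀ k, 0 ≤ w' k := by
    intro k; simp only [hw']; split
    · exact (hw _).le
    · exact le_refl 0
  set c : ℕ → ℝ := fun n => (α / T) * ∑ k ∈ Finset.range n, w' k with hc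
  have hc0 : c 0 = 0 := by simp [hc]
  have hcsucc : ∀ n, c (n + 1) = c n + (α / T) * w' n := by
    intro n; simp [hc, Finset.sum_range_succ, mul_add]
  have hcmono : Monotone c := by
    apply monotone_nat_of_le_succ
    intro n
    rw [hcsucc n]
    have := hw'nonneg n
    nlinarith [div_pos hα0 hT0]
  have hcm : c m₀ = α := by
    have : ∑ k ∈ Finset.range m₀, w' k = T := by
      rw [hT, ← Fin.sum_univ_eq_sum_range]
      apply Finset.sum_congr rfl
      intro i _
      simp [hw', i.isLt]
    rw [hc]; simp only [this]
    field_simp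
  have hci_nonneg : ∀ i : Fin m₀, 0 ≤ c i := fun i => hc0 ▸ hcmono (Nat.zero_le _)
  have hci_le : ∀ i : Fin m₀, c i ≤ α := fun i => hcm ▸ hcmono i.isLt.le
  have hci_lt1 : ∀ i : Fin m₀, c i < 1 := fun i => lt_of_le_of_lt (hci_le i) hα1
  set P : Fin m₀ → ℝ → ℝ := fun i u => if u < c i then u + (1 - c i) else u - c i with hP
  have hPmeas : ∀ i, Measurable (P i) := by
    intro i
    exact Measurable.ite (measurableSet_lt measurable_id measurable_const)
      (measurable_id.add_const _) (measurable_id.sub_const _)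
  have hw'eq : ∀ i : Fin m₀, w' (i : ℕ) = w i := by
    intro i; simp [hw', i.isLt]
  -- threshold equivalence
  have hthresh : ∀ (i : Fin m₀) (x : ℝ), x / w i ≤ α / T ↔ x ≤ (α / T) * w i := by
    intro i x
    have hcan : α / T * T = α := div_mul_cancel₀ _ hT0.ne'
    rw [div_le_div_iff₀ (hw i) hT0]
    constructor
    · intro h
      calc x ≤ α * w i / T := (le_div_iff₀ hT0).mpr h
        _ = α / T * w i := by ring
    · intro h
      calc x * T ≤ α / T * w i * T := mul_le_mul_of_nonneg_right h hT0.le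
        _ = α / T * T * w i := by ring
        _ = α * w i := by rw [hcan]
  refine ⟨ℝ, inferInstance, volume.restrict (Set.Icc 0 1), ⟨by simp [Real.volume_Icc]⟩, P,
    hPmeas, fun i => rot_map_aux (c i) (hci_nonneg i) (hci_lt1 i), ?_⟩
  have hSmeas : MeasurableSet {u : ℝ | ∃ i, P i u / w i ≤ α / T} := by
    have : {u : ℝ | ∃ i, P i u / w i ≤ α / T} = ⋃ i, (fun u => P i u / w i) ⁻¹' Set.Iic (α / T) := by
      ext u; simp [Set.mem_iUnion]
    rw [this]
    exact MeasurableSet.iUnion fun i => ((hPmeas i).div_const _) measurableSet_Iic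
  rw [Measure.restrict_apply hSmeas]
  have hset : {u : ℝ | ∃ i, P i u / w i ≤ α / T} ∩ Set.Icc 0 1 = Set.Icc 0 α := by
    ext u
    simp only [Set.mem_inter_iff, Set.mem_setOf_eq, Set.mem_Icc]
    constructor
    · rintro ⟨⟨i, hi⟩, h0, h1⟩
      refine ⟨h0, ?_⟩
      by_contra hgt
      push_neg at hgt
      rw [hthresh] at hi
      have hciu : c i ≤ u := le_trans (hci_le i) hgt.le
      have hPi : P i u = u - c i := by
        rw [hP]; simp only; rw [if_neg (not_lt.mpr hciu)]
      have hc1 : c ((i : ℕ) + 1) ≤ α := hcm ▸ hcmono i.isLt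
      rw [hPi] at hi
      have := hcsucc (i : ℕ)
      rw [hw'eq i] at this
      linarith
    · rintro ⟨h0, h1⟩
      have h1' : u ≤ 1 := le_trans h1 hα1.le
      refine ⟨?_, h0, h1'⟩
      have hum : u ≤ c ((m₀ - 1) + 1) := by
        rw [Nat.sub_add_cancel hm, hcm]; exact h1
      obtain ⟨n, hn, hcn, hcn1⟩ := whp_find_interval c u hc0 h0 (m₀ - 1) hum
      have hnm : n < m₀ := lt_of_le_of_lt hn (Nat.pred_lt (Nat.one_le_iff_ne_zero.mp hm))
      refine ⟨⟨n, hnm⟩, ?_⟩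
      rw [hthresh]
      have hPn : P ⟨n, hnm⟩ u = u - c n := by
        rw [hP]; simp only; rw [if_neg (not_lt.mpr hcn)]
      rw [hPn]
      have := hcsucc n
      rw [show w' n = w ⟨n, hnm⟩ from by simp [hw', hnm]] at this
      linarith
  rw [hset, Real.volume_Icc]
  norm_num
end

section
/- Dominance of WHP among weighted step-down procedures: let w_1,…,w_m > 0, α ∈ (0,1), and let 0 ≤ α_1 ≤ α_2 ≤ … ≤ α_m be critical values defining the weighted p-value step-down procedure M^w that, for weighted p-values sorted as p̃_{σ(1)} ≤ … ≤ p̃_{σ(m)}, rejects H_{σ(i)} iff p̃_{σ(j)} ≤ α_j for all j ≤ i. Suppose M^w controls the FWER at level α under arbitrary dependence: for every subset I₀ ⊆ {1,…,m} of true null indices and every random vector (P_1,…,P_m) with values in [0,1] whose coordinates P_i for i ∈ I₀ are each marginally uniform on [0,1], the probability that M^w rejects some H_i with i ∈ I₀ is at most α. Then α_r ≤ α/∑_{i∈S} w_i for every r ∈ {1,…,m} and every subset S ⊆ {1,…,m} with |S| = m−r+1; consequently, for every vector of p-values, every hypothesis rejected by M^w is also rejected by the weighted Holm procedure, i.e.,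 M^w ⪯ WHP. -/
open Finset MeasureTheory

lemma disj_Ico {a b c d : ℝ} (h : b ≤ c) : Disjoint (Set.Ico a b) (Set.Ico c d) := by
  rw [Set.Ico_disjoint_Ico]
  exact le_trans (min_le_left _ _) (le_trans h (le_max_right _ _))


lemma map_fract_sub (s : ℝ) (hs0 : 0 ≤ s) (hs1 : s < 1) :
    (volume.restrict (Set.Icc (0:ℝ) 1)).map (fun u => Int.fract (u - s)) =
      volume.restrict (Set.Icc (0:ℝ) 1) := by
  have hmeas : Measurable fun u : ℝ => Int.fract (u - s) := (measurable_id.sub_const s).fract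
  have hIcoIcc : volume.restrict (Set.Ico (0:ℝ) 1) = volume.restrict (Set.Icc 0 1) :=
    Measure.restrict_congr_set Ico_ae_eq_Icc
  rw [← hIcoIcc]
  ext A hA
  rw [Measure.map_apply hmeas hA, Measure.restrict_apply (hmeas hA), Measure.restrict_apply hA]
  set f : ℝ → ℝ := fun u => Int.fract (u - s) with hf
  have hf1 : ∀ u : ℝ, 0 ≤ u → u < s → f u = u + (1 - s) := by
    intro u h1 h2
    have : f u = Int.fract (u - s + 1) := (Int.fract_add_one _).symm
    rw [this, Int.fract_eq_self.2 ⟨by linarith, by linarith⟩]; ring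
  have hf2 : ∀ u : ℝ, s ≤ u → u < 1 → f u = u - s := by
    intro u h1 h2
    exact Int.fract_eq_self.2 ⟨by linarith, by linarith⟩
  have hsplitL : f ⁻¹' A ∩ Set.Ico 0 1 = (f ⁻¹' A ∩ Set.Ico 0 s) ∪ (f ⁻¹' A ∩ Set.Ico s 1) := by
    rw [← Set.inter_union_distrib_left, Set.Ico_union_Ico_eq_Ico hs0 hs1.le]
  have hP1 : f ⁻¹' A ∩ Set.Ico 0 s = (fun u => u + (1 - s)) ⁻¹' (A ∩ Set.Ico (1-s) 1) := by
    ext u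
    simp only [Set.mem_inter_iff, Set.mem_preimage, Set.mem_Ico]
    constructor
    · rintro ⟨h1, h2, h3⟩
      rw [hf1 u h2 h3] at h1
      exact ⟨h1, by linarith, by linarith⟩
    · rintro ⟨h1, h2, h3⟩
      have h2' : (0:ℝ) ≤ u := by linarith
      have h3' : u < s := by linarith
      exact ⟨by rw [hf1 u h2' h3']; exact h1, h2', h3'⟩
  have hP2 : f ⁻¹' A ∩ Set.Ico s 1 = (fun u => u + (-s)) ⁻¹' (A ∩ Set.Ico 0 (1-s)) := by
    ext u
    simp only [Set.mem_inter_iff, Set.mem_preimage, Set.mem_Ico]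
    constructor
    · rintro ⟨h1, h2, h3⟩
      rw [hf2 u h2 h3] at h1
      exact ⟨by simpa [sub_eq_add_neg] using h1, by linarith, by linarith⟩
    · rintro ⟨h1, h2, h3⟩
      have h2' : s ≤ u := by linarith
      have h3' : u < 1 := by linarith
      exact ⟨by rw [hf2 u h2' h3']; simpa [sub_eq_add_neg] using h1, h2', h3'⟩
  have hdisj : Disjoint (f ⁻¹' A ∩ Set.Ico 0 s) (f ⁻¹' A ∩ Set.Ico s 1) :=
    (disj_Ico le_rfl).mono Set.inter_subset_right Set.inter_subset_right
  rw [hsplitL, measure_union hdisj ((hmeas hA).inter measurableSet_Ico), hP1, hP2,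
    measure_preimage_add_right, measure_preimage_add_right]
  have hsplitR : A ∩ Set.Ico 0 1 = (A ∩ Set.Ico 0 (1-s)) ∪ (A ∩ Set.Ico (1-s) 1) := by
    rw [← Set.inter_union_distrib_left, Set.Ico_union_Ico_eq_Ico (by linarith) (by linarith)]
  rw [hsplitR, measure_union ((disj_Ico le_rfl).mono
    Set.inter_subset_right Set.inter_subset_right) (hA.inter measurableSet_Ico), add_comm]

/-- A weighted p-value step-down procedure with critical values `cv`: with the weighted
p-values `p j / w j` sorted increasingly by the permutation `Tuple.sort`, it rejects the
hypothesis of rank `r` iff the `j`-th smallest weighted p-value is `≤ cv j` for all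
`j ≤ r`. -/
noncomputable def stepDownRejects (m : ℕ) (w : Fin m → ℝ) (cv : Fin m → ℝ)
    (p : Fin m → ℝ) (i : Fin m) : Prop :=
  ∃ r : Fin m, Tuple.sort (fun j => p j / w j) r = i ∧
    ∀ j ≤ r, p (Tuple.sort (fun j => p j / w j) j) / w (Tuple.sort (fun j => p j / w j) j)
      ≤ cv j

lemma lemB (m : ℕ) (w : Fin m → ℝ) (hw : ∀ i, 0 < w i) (cv : Fin m → ℝ)
    (hcv0 : ∀ j, 0 ≤ cv j) (r : Fin m) (S : Finset (Fin m)) (hS : S.card = m - r.val)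
    (p : Fin m → ℝ) (h0 : ∀ k, 0 ≤ p k) (hout : ∀ k, k ∉ S → p k = 0)
    (i : Fin m) (hiS : i ∈ S) (hi : p i / w i ≤ cv r) :
    ∃ i' ∈ S, stepDownRejects m w cv p i' := by
  set q : Fin m → ℝ := fun j => p j / w j with hq
  set σ := Tuple.sort q with hσ
  have hqmono : Monotone (q ∘ σ) := Tuple.monotone_sort q
  have hq0 : ∀ k, 0 ≤ q k := fun k => div_nonneg (h0 k) (hw k).le
  have hcardc : Sᶜ.card = r.val := by
    rw [Finset.card_compl, hS, Fintype.card_fin, Nat.sub_sub_self r.isLt.le]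
  set T : Finset (Fin m) := Finset.univ.filter (fun j => σ j ∈ S) with hT
  have hTne : T.Nonempty := ⟨σ.symm i, by simp [hT, Equiv.apply_symm_apply, hiS]⟩
  set ρ := T.min' hTne with hρ
  have hρS : σ ρ ∈ S := (Finset.mem_filter.1 (T.min'_mem hTne)).2
  have hbefore : ∀ j, j < ρ → σ j ∉ S := by
    intro j hj hmem
    exact absurd (T.min'_le j (by simp [hT, hmem])) (not_le.2 hj)
  have hρr : ρ ≤ r := by
    by_contra h
    push_neg at h
    have hmap : ∀ j ∈ Finset.Iic r, σ j ∈ Sᶜ := by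
      intro j hj
      rw [Finset.mem_compl]
      exact hbefore j (lt_of_le_of_lt (Finset.mem_Iic.1 hj) h)
    have := Finset.card_le_card_of_injOn σ hmap (σ.injective.injOn)
    rw [Fin.card_Iic, hcardc] at this
    omega
  refine ⟨σ ρ, hρS, ρ, rfl, ?_⟩
  intro j hj
  rcases lt_or_eq_of_le hj with hlt | heq
  · have hz : p (σ j) = 0 := hout _ (hbefore j hlt)
    rw [hz, zero_div]
    exact hcv0 j
  · subst heq
    show q (σ ρ) ≤ cv ρ
    rcases eq_or_lt_of_le hρr with hρeq | hρlt
    · have hrank : ρ ≤ σ.symm i := T.min'_le _ (by simp [hT, Equiv.apply_symm_apply, hiS])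
      have h1 : q (σ ρ) ≤ q (σ (σ.symm i)) := hqmono hrank
      rw [Equiv.apply_symm_apply] at h1
      rw [hρeq] at h1 ⊢
      exact le_trans h1 hi
    · have hex : ∃ j', ρ < j' ∧ σ j' ∉ S := by
        by_contra hcon
        push_neg at hcon
        have hsub : Sᶜ ⊆ (Finset.Iio ρ).image σ := by
          intro k hk
          rw [Finset.mem_compl] at hk
          refine Finset.mem_image.2 ⟨σ.symm k, ?_, Equiv.apply_symm_apply _ _⟩
          rw [Finset.mem_Iio]
          rcases lt_trichotomy (σ.symm k) ρ with h | h | h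
          · exact h
          · exact absurd (h ▸ hρS) (by rw [Equiv.apply_symm_apply]; exact hk)
          · have h2 := hcon _ h
            rw [Equiv.apply_symm_apply] at h2
            exact absurd h2 hk
        have := Finset.card_le_card hsub
        rw [hcardc, Finset.card_image_of_injective _ σ.injective, Fin.card_Iio] at this
        have : r.val < r.val := lt_of_le_of_lt this (by exact_mod_cast hρlt)
        omega
      obtain ⟨j', hj'1, hj'2⟩ := hex
      have hz : q (σ j') = 0 := by
        show p (σ j') / w (σ j') = 0
        rw [hout _ hj'2, zero_div]
      have hle : q (σ ρ) ≤ q (σ j') := hqmono hj'1.le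
      rw [hz] at hle
      exact le_trans hle (hcv0 _)

/-- dominance of WHP among weighted step-down procedures: if the step-down
procedure with nondecreasing critical values `cv` controls the FWER at level `α` under
arbitrary dependence (for every set `I₀` of true nulls and every `[0,1]`-valued random
vector whose coordinates in `I₀` are marginally uniform on `[0,1]`), then
`cv r ≤ α / ∑_{i∈S} w i` for every rank `r` and every `S` with `|S| = m − r + 1`;
consequently every hypothesis it rejects is also rejected by the weighted Holm procedure
(whose critical values are `α / ∑_{k=j}^{m} w_{σ(k)}`). -/
theorem stepdown_dominated_by_whp (m : ℕ) (hm : 1 ≤ m) (w : Fin m → ℝ) (hw : ∀ i, 0 < w i)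
    (α : ℝ) (hα : α ∈ Set.Ioo (0 : ℝ) 1)
    (cv : Fin m → ℝ) (hcv0 : ∀ j, 0 ≤ cv j) (hcvmono : Monotone cv)
    (hFWER : ∀ (Ω : Type) (_ : MeasurableSpace Ω) (μ : Measure Ω),
      IsProbabilityMeasure μ →
      ∀ (P : Fin m → Ω → ℝ) (I₀ : Finset (Fin m)),
        (∀ i, Measurable (P i)) →
        (∀ i ω, P i ω ∈ Set.Icc (0 : ℝ) 1) →
        (∀ i ∈ I₀, μ.map (P i) = volume.restrict (Set.Icc (0 : ℝ) 1)) →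
        μ {ω | ∃ i ∈ I₀, stepDownRejects m w cv (fun k => P k ω) i}
          ≤ ENNReal.ofReal α) :
    (∀ r : Fin m, ∀ S : Finset (Fin m), S.card = m - r.val →
        cv r ≤ α / ∑ i ∈ S, w i) ∧
    (∀ p : Fin m → ℝ, (∀ i, p i ∈ Set.Icc (0 : ℝ) 1) → ∀ i : Fin m,
        stepDownRejects m w cv p i →
        stepDownRejects m w
          (fun j => α / ∑ k ∈ Finset.Ici j, w (Tuple.sort (fun l => p l / w l) k)) p i) := by
  obtain ⟨hα0, hα1⟩ := hα
  have key : ∀ r : Fin m, ∀ S : Finset (Fin m), S.card = m - r.val →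
      cv r ≤ α / ∑ i ∈ S, w i := by
    intro r S hS
    by_contra hcon
    push_neg at hcon
    set W := ∑ i ∈ S, w i with hWdef
    have hSne : S.Nonempty := Finset.card_pos.1 (by rw [hS]; omega)
    have hW : 0 < W := Finset.sum_pos (fun i _ => hw i) hSne
    have hcvr : 0 < cv r := lt_trans (div_pos hα0 hW) hcon
    have hαW : α < W * cv r := by
      rw [div_lt_iff₀ hW] at hcon; linarith
    set M := max 1 (W * cv r) with hM
    have hM1 : (1:ℝ) ≤ M := le_max_left _ _
    have hM0 : 0 < M := lt_of_lt_of_le one_pos hM1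
    set t := cv r / M with ht
    have ht0 : 0 < t := div_pos hcvr hM0
    have htcv : t ≤ cv r := div_le_self hcvr.le hM1
    have hWt1 : W * t ≤ 1 := by
      rw [ht, mul_div_assoc']
      exact div_le_one_of_le₀ (le_max_right _ _) hM0.le
    have hWtα : α < W * t := by
      rcases le_total (W * cv r) 1 with h | h
      · have hMe : M = 1 := max_eq_left h
        rw [ht, hMe, div_one]
        exact hαW
      · have hMe : M = W * cv r := max_eq_right h
        have hone : W * t = 1 := by
          rw [ht, hMe, ← mul_div_assoc]
          exact div_self (by nlinarith)
        rw [hone]; exact hα1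
    set s : Fin m → ℝ := fun i => t * ∑ k ∈ S.filter (fun k => k < i), w k with hsdef
    have hs0 : ∀ i, 0 ≤ s i :=
      fun i => mul_nonneg ht0.le (Finset.sum_nonneg fun k _ => (hw k).le)
    have hsadd : ∀ i ∈ S, s i + w i * t ≤ W * t := by
      intro i hi
      have hsub : insert i (S.filter (fun k => k < i)) ⊆ S := by
        intro k hk
        rcases Finset.mem_insert.1 hk with h | h
        · exact h ▸ hi
        · exact (Finset.mem_filter.1 h).1
      have h1 : ∑ k ∈ insert i (S.filter (fun k => k < i)), w k ≤ W :=
        Finset.sum_le_sum_of_subset_of_nonneg hsub (fun k _ _ => (hw k).le)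
      rw [Finset.sum_insert (by simp)] at h1
      calc s i + w i * t = t * (w i + ∑ k ∈ S.filter (fun k => k < i), w k) := by
            rw [hsdef]; ring
        _ ≤ t * W := mul_le_mul_of_nonneg_left h1 ht0.le
        _ = W * t := mul_comm _ _
    have hwt1 : ∀ i ∈ S, w i * t ≤ 1 := fun i hi =>
      le_trans (le_trans (le_add_of_nonneg_left (hs0 i)) (hsadd i hi)) hWt1
    have hmono : ∀ i ∈ S, ∀ j ∈ S, i < j → s i + w i * t ≤ s j := by
      intro i hi j hj hij
      have hsub2 : insert i (S.filter (fun k => k < i)) ⊆ S.filter (fun k => k < j) := by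
        intro k hk
        rcases Finset.mem_insert.1 hk with h | h
        · subst h; exact Finset.mem_filter.2 ⟨hi, hij⟩
        · obtain ⟨h1, h2⟩ := Finset.mem_filter.1 h
          exact Finset.mem_filter.2 ⟨h1, lt_trans h2 hij⟩
      have h1 := Finset.sum_le_sum_of_subset_of_nonneg hsub2 (fun k _ _ => (hw k).le)
      rw [Finset.sum_insert (by simp)] at h1
      calc s i + w i * t = t * (w i + ∑ k ∈ S.filter (fun k => k < i), w k) := by
            rw [hsdef]; ring
        _ ≤ t * ∑ k ∈ S.filter (fun k => k < j), w k := mul_le_mul_of_nonneg_left h1 ht0.le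
        _ = s j := rfl
    set P : Fin m → ℝ → ℝ := fun i u => if i ∈ S then Int.fract (u - s i) else 0 with hPdef
    set μ : Measure ℝ := volume.restrict (Set.Icc 0 1) with hμ
    have hprob : IsProbabilityMeasure μ := ⟨by simp [hμ, Real.volume_Icc]⟩
    have hPmeas : ∀ i, Measurable (P i) := by
      intro i
      by_cases hi : i ∈ S
      · simpa [hPdef, hi] using (measurable_id.sub_const (s i)).fract
      · simpa [hPdef, hi] using measurable_const
    have hPrange : ∀ i u, P i u ∈ Set.Icc (0:ℝ) 1 := by
      intro i u
      by_cases hi : i ∈ S <;> simp only [hPdef, hi, if_true, if_false, Set.mem_Icc]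
      · exact ⟨Int.fract_nonneg _, (Int.fract_lt_one _).le⟩
      · exact ⟨le_refl _, zero_le_one⟩
    have hslt1 : ∀ i ∈ S, s i < 1 := by
      intro i hi
      have h1 := hsadd i hi
      nlinarith [hw i, mul_pos (hw i) ht0]
    have hPmarg : ∀ i ∈ S, μ.map (P i) = volume.restrict (Set.Icc (0:ℝ) 1) := by
      intro i hi
      have hPi : P i = fun u => Int.fract (u - s i) := funext fun u => if_pos hi
      rw [hPi, hμ]
      exact map_fract_sub (s i) (hs0 i) (hslt1 i hi)
    have hevent := hFWER ℝ inferInstance μ hprob P S hPmeas hPrange hPmarg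
    set U : Set ℝ := ⋃ i ∈ S, Set.Ico (s i) (s i + w i * t) with hU
    have hUsub : U ⊆ {ω | ∃ i ∈ S, stepDownRejects m w cv (fun k => P k ω) i} := by
      intro u hu
      simp only [hU, Set.mem_iUnion, Set.mem_Ico] at hu
      obtain ⟨i, hiS, h1, h2⟩ := hu
      have hfr : P i u = u - s i := by
        have : P i u = Int.fract (u - s i) := if_pos hiS
        rw [this, Int.fract_eq_self.2 ⟨by linarith, by
          have := hwt1 i hiS; linarith⟩]
      refine lemB m w hw cv hcv0 r S hS (fun k => P k u) ?_ ?_ i hiS ?_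
      · intro k
        by_cases hk : k ∈ S <;> simp [hPdef, hk, Int.fract_nonneg]
      · intro k hk
        simp [hPdef, hk]
      · show P i u / w i ≤ cv r
        rw [hfr, div_le_iff₀ (hw i)]
        nlinarith [htcv, hw i]
    have hUmeas : MeasurableSet U :=
      Set.Finite.measurableSet_biUnion S.finite_toSet (fun i _ => measurableSet_Ico)
    have hUicc : U ⊆ Set.Icc 0 1 := by
      intro u hu
      simp only [hU, Set.mem_iUnion, Set.mem_Ico] at hu
      obtain ⟨i, hiS, h1, h2⟩ := hu
      exact ⟨le_trans (hs0 i) h1, by have := hsadd i hiS; linarith⟩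
    have hUvol : μ U = ENNReal.ofReal (W * t) := by
      rw [hμ, Measure.restrict_apply hUmeas, Set.inter_eq_self_of_subset_left hUicc, hU]
      rw [measure_biUnion_finset ?_ (fun i _ => measurableSet_Ico)]
      · have hterm : ∀ i ∈ S, volume (Set.Ico (s i) (s i + w i * t)) =
            ENNReal.ofReal (w i * t) := by
          intro i _
          rw [Real.volume_Ico]
          congr 1
          ring
        rw [Finset.sum_congr rfl hterm,
          ← ENNReal.ofReal_sum_of_nonneg (fun i _ => mul_nonneg (hw i).le ht0.le)]
        congr 1
        rw [← Finset.sum_mul]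
      · intro i hi j hj hij
        rcases lt_or_gt_of_ne hij with h | h
        · exact disj_Ico (hmono i hi j hj h)
        · exact (disj_Ico (hmono j hj i hi h)).symm
    have hlt : ENNReal.ofReal α < μ U := by
      rw [hUvol]
      exact (ENNReal.ofReal_lt_ofReal_iff (by positivity)).2 hWtα
    exact absurd hevent (not_le.2 (lt_of_lt_of_le hlt (measure_mono hUsub)))
  refine ⟨key, ?_⟩
  intro p hp i hrej
  obtain ⟨r, hσr, hcond⟩ := hrej
  refine ⟨r, hσr, fun j hj => le_trans (hcond j hj) ?_⟩
  have hcard : ((Finset.Ici j).image (Tuple.sort (fun l => p l / w l))).card = m - j.val := by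
    rw [Finset.card_image_of_injective _ (Tuple.sort (fun l => p l / w l)).injective,
      Fin.card_Ici]
  have h1 := key j _ hcard
  rwa [Finset.sum_image
    (fun a _ b _ h => (Tuple.sort (fun l => p l / w l)).injective h)] at h1
end

section
/- Conditional sharpness of WAP (optimality under a weight-ratio condition): let m₀ ≥ 1, let w_1,…,w_{m₀} > 0 satisfy (min_i w_i)/(max_i w_i) ≥ α, and let α ∈ (0,1). Then there exists a random vector (P_1,…,P_{m₀}) on some probability space such that each P_i is marginally uniform on [0,1] and the probability that some index i ∈ {1,…,m₀} simultaneously attains P_i = min_{1≤j≤m₀} P_j and satisfies P_i ≤ (w_i/∑_{k=1}^{m₀} w_k)·α equals exactly α. In particular, when all m₀ hypotheses are true nulls, the FWER of the weighted alternative Holm procedure equals α, so its critical values cannot be increased without violating FWER control. -/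
open Finset MeasureTheory

namespace WapSharpAux

noncomputable def Q : UnitAddCircle → ℝ := fun x => (AddCircle.equivIoc 1 0 x : ℝ)

lemma Q_coe {x : ℝ} (hx : x ∈ Set.Ioc (0:ℝ) 1) : Q ((x : UnitAddCircle)) = x := by
  have : x ∈ Set.Ioc (0:ℝ) (0+1) := by rwa [zero_add]
  have h := AddCircle.liftIoc_coe_apply (f := (id : ℝ → ℝ)) this
  simpa [AddCircle.liftIoc, Set.restrict, Q] using h

lemma Q_meas : Measurable Q :=
  measurable_subtype_coe.comp (AddCircle.measurableEquivIoc 1 0).measurable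

lemma map_Q : (volume : Measure UnitAddCircle).map Q = volume.restrict (Set.Ioc 0 1) := by
  have hmk : Measurable ((↑) : ℝ → UnitAddCircle) := AddCircle.measurable_mk'
  rw [← (AddCircle.measurePreserving_mk 1 0).map_eq, Measure.map_map Q_meas hmk, zero_add]
  have hae : (Q ∘ ((↑) : ℝ → UnitAddCircle)) =ᵐ[volume.restrict (Set.Ioc (0:ℝ) 1)] id := by
    filter_upwards [ae_restrict_mem measurableSet_Ioc] with x hx
    exact Q_coe hx
  rw [Measure.map_congr hae, Measure.map_id]

/-- map of the restricted Lebesgue measure under the "rotation" `ω ↦ Q (ω - b)`. -/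
lemma map_rot (b : ℝ) :
    (volume.restrict (Set.Ioc (0:ℝ) 1)).map (fun ω => Q ((ω - b : ℝ) : UnitAddCircle))
      = volume.restrict (Set.Icc (0:ℝ) 1) := by
  have hmk : Measurable ((↑) : ℝ → UnitAddCircle) := AddCircle.measurable_mk'
  have h1 : (fun ω : ℝ => ((ω - b : ℝ) : UnitAddCircle))
      = (fun y : UnitAddCircle => y - ((b : ℝ) : UnitAddCircle)) ∘ ((↑) : ℝ → UnitAddCircle) := by
    funext ω; simp
  have hmeas1 : Measurable (fun ω : ℝ => ((ω - b : ℝ) : UnitAddCircle)) :=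
    hmk.comp (measurable_sub_const b)
  have key : (volume.restrict (Set.Ioc (0:ℝ) 1)).map
      (fun ω : ℝ => ((ω - b : ℝ) : UnitAddCircle)) = volume := by
    rw [h1, ← Measure.map_map (measurable_sub_const _) hmk]
    have h2 : (volume.restrict (Set.Ioc (0:ℝ) 1)).map ((↑) : ℝ → UnitAddCircle)
        = (volume : Measure UnitAddCircle) := by
      have := (AddCircle.measurePreserving_mk 1 0).map_eq
      rwa [zero_add] at this
    rw [h2, map_sub_right_eq_self]
  calc (volume.restrict (Set.Ioc (0:ℝ) 1)).map (fun ω => Q ((ω - b : ℝ) : UnitAddCircle))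
      = ((volume.restrict (Set.Ioc (0:ℝ) 1)).map
          (fun ω : ℝ => ((ω - b : ℝ) : UnitAddCircle))).map Q := by
        rw [Measure.map_map Q_meas hmeas1]; rfl
    _ = volume.restrict (Set.Ioc 0 1) := by rw [key, map_Q]
    _ = volume.restrict (Set.Icc 0 1) := Measure.restrict_congr_set Ioc_ae_eq_Icc

end WapSharpAux

/-- conditional sharpness / optimality of WAP: let `m₀ ≥ 1`, let the
positive weights satisfy `(min_i w i)/(max_i w i) ≥ α`, and let `α ∈ (0,1)`. Then there is
a random vector `(P i)_{i < m₀}` on some probability space with uniform `[0,1]` marginals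
such that the probability that some index `i` simultaneously attains the minimum
`P i = min_j P j` and satisfies `P i ≤ (w i / ∑ k w k)·α` equals exactly `α`; i.e. the
FWER of the weighted alternative Holm procedure equals `α` when all hypotheses are true
nulls, so its critical values cannot be increased without violating FWER control. -/
theorem wap_fwer_sharp (m₀ : ℕ) (hm : 1 ≤ m₀) (w : Fin m₀ → ℝ) (hw : ∀ i, 0 < w i)
    (α : ℝ) (hα : α ∈ Set.Ioo (0 : ℝ) 1)
    (hratio : α ≤ (Finset.univ.inf' ⟨⟨0, hm⟩, Finset.mem_univ _⟩ w) /
        (Finset.univ.sup' ⟨⟨0, hm⟩, Finset.mem_univ _⟩ w)) :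
    ∃ (Ω : Type) (_ : MeasurableSpace Ω) (μ : Measure Ω) (_ : IsProbabilityMeasure μ)
      (P : Fin m₀ → Ω → ℝ),
      (∀ i, Measurable (P i)) ∧
      (∀ i, μ.map (P i) = volume.restrict (Set.Icc (0 : ℝ) 1)) ∧
      μ {ω | ∃ i, (∀ j, P i ω ≤ P j ω) ∧ P i ω ≤ (w i / ∑ k, w k) * α}
        = ENNReal.ofReal α := by
  obtain ⟨hα0, hα1⟩ := hα
  set S : ℝ := ∑ k, w k with hS_def
  have hS : 0 < S := Finset.sum_pos (fun i _ => hw i) ⟨⟨0, hm⟩, Finset.mem_univ _⟩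
  set c : Fin m₀ → ℝ := fun i => w i / S * α with hc_def
  have hc_pos : ∀ i, 0 < c i := fun i => mul_pos (div_pos (hw i) hS) hα0
  -- cumulative sums via ℕ
  set cc : ℕ → ℝ := fun n => if h : n < m₀ then c ⟨n, h⟩ else 0 with hcc_def
  have hcc_nonneg : ∀ n, 0 ≤ cc n := by
    intro n; simp only [hcc_def]; split
    · exact (hc_pos _).le
    · exact le_rfl
  set b' : ℕ → ℝ := fun n => ∑ j ∈ Finset.range n, cc j with hb'_def
  have hb'_mono : Monotone b' := fun m n hmn =>
    Finset.sum_le_sum_of_subset_of_nonneg (Finset.range_subset_range.2 hmn) (fun j _ _ => hcc_nonneg j)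
  have hb'_succ : ∀ n, b' (n + 1) = b' n + cc n := fun n => Finset.sum_range_succ cc n
  have hb'_total : b' m₀ = α := by
    have h1 : b' m₀ = ∑ i : Fin m₀, c i := by
      show ∑ j ∈ Finset.range m₀, cc j = ∑ i : Fin m₀, c i
      rw [← Fin.sum_univ_eq_sum_range (fun j => cc j) m₀]
      refine Finset.sum_congr rfl fun i _ => ?_
      simp [hcc_def, i.isLt]
    rw [h1]
    have : ∑ i : Fin m₀, c i = (∑ i : Fin m₀, w i) / S * α := by
      rw [Finset.sum_div, Finset.sum_mul]
    rw [this, ← hS_def, div_self hS.ne', one_mul]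
  set b : Fin m₀ → ℝ := fun i => b' i.val with hb_def
  have hb_nonneg : ∀ i, 0 ≤ b i := fun i =>
    Finset.sum_nonneg fun j _ => hcc_nonneg j
  have hb_add : ∀ i : Fin m₀, b i + c i = b' (i.val + 1) := by
    intro i
    rw [hb'_succ]
    simp [hb_def, hcc_def, i.isLt]
  have hb_add_le : ∀ i : Fin m₀, b i + c i ≤ α := by
    intro i
    rw [hb_add]; rw [← hb'_total]
    exact hb'_mono i.isLt
  have hb_lt_one : ∀ i, b i < 1 := fun i =>
    lt_of_le_of_lt (by linarith [hb_add_le i, (hc_pos i).le, hc_pos i]) hα1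
  -- the probability space and random variables
  refine ⟨ℝ, inferInstance, volume.restrict (Set.Ioc 0 1), ⟨by simp⟩,
    fun i ω => WapSharpAux.Q (((ω - b i : ℝ) : UnitAddCircle)), ?_, ?_, ?_⟩
  · intro i
    exact WapSharpAux.Q_meas.comp (AddCircle.measurable_mk'.comp (measurable_sub_const _))
  · intro i
    exact WapSharpAux.map_rot (b i)
  · -- the event probability
    set P : Fin m₀ → ℝ → ℝ := fun i ω => WapSharpAux.Q (((ω - b i : ℝ) : UnitAddCircle))
      with hP_def
    have hPmeas : ∀ i, Measurable (P i) := fun i =>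
      WapSharpAux.Q_meas.comp (AddCircle.measurable_mk'.comp (measurable_sub_const _))
    -- explicit values on (0,1]
    have hval1 : ∀ (i : Fin m₀) (ω : ℝ), ω ∈ Set.Ioc (0:ℝ) 1 → b i < ω →
        P i ω = ω - b i := by
      intro i ω hω hbi
      exact WapSharpAux.Q_coe ⟨by linarith, by linarith [hb_nonneg i, hω.2]⟩
    have hval2 : ∀ (i : Fin m₀) (ω : ℝ), ω ∈ Set.Ioc (0:ℝ) 1 → ω ≤ b i →
        P i ω = ω - b i + 1 := by
      intro i ω hω hbi
      have hcoe : ((ω - b i : ℝ) : UnitAddCircle) = ((ω - b i + 1 : ℝ) : UnitAddCircle) :=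
        (AddCircle.coe_add_period 1 (ω - b i)).symm
      rw [hP_def]
      simp only
      rw [hcoe]
      exact WapSharpAux.Q_coe ⟨by linarith [hω.1, hb_lt_one i], by linarith⟩
    -- the event set equals Ioc 0 α inside Ioc 0 1
    have hset : {ω : ℝ | ∃ i, (∀ j, P i ω ≤ P j ω) ∧ P i ω ≤ (w i / ∑ k, w k) * α}
        ∩ Set.Ioc (0:ℝ) 1 = Set.Ioc 0 α := by
      ext ω
      simp only [Set.mem_inter_iff, Set.mem_setOf_eq, Set.mem_Ioc]
      constructor
      · rintro ⟨⟨i, _, hci⟩, hω1, hω2⟩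
        refine ⟨hω1, ?_⟩
        by_cases hbi : b i < ω
        · rw [hval1 i ω ⟨hω1, hω2⟩ hbi] at hci
          have := hb_add_le i
          rw [hc_def] at this
          linarith
        · push_neg at hbi
          rw [hval2 i ω ⟨hω1, hω2⟩ hbi] at hci
          have h1 : b i + c i ≤ α := hb_add_le i
          rw [hc_def] at h1
          linarith
      · rintro ⟨hω1, hωα⟩
        have hω2 : ω ≤ 1 := le_of_lt (lt_of_le_of_lt hωα hα1)
        have hωmem : ω ∈ Set.Ioc (0:ℝ) 1 := ⟨hω1, hω2⟩
        -- find minimal n with ω ≤ b' (n+1)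
        have hex : ∃ n, ω ≤ b' (n + 1) := by
          refine ⟨m₀ - 1, ?_⟩
          rw [Nat.sub_add_cancel hm, hb'_total]; exact hωα
        classical
        set n := Nat.find hex with hn_def
        have hn : ω ≤ b' (n + 1) := Nat.find_spec hex
        have hmin : ∀ k < n, b' (k + 1) < ω := fun k hk => by
          have := Nat.find_min hex hk; push_neg at this; exact this
        have hn_lt : n < m₀ := by
          have : n ≤ m₀ - 1 := Nat.find_min' hex (by
            rw [Nat.sub_add_cancel hm, hb'_total]; exact hωα)
          omega
        set i : Fin m₀ := ⟨n, hn_lt⟩ with hi_def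
        have hbi : b i < ω := by
          rcases Nat.eq_zero_or_pos n with h0 | hpos
          · show b' n < ω
            rw [h0]; simpa [hb'_def] using hω1
          · show b' n < ω
            have h := hmin (n - 1) (by omega)
            rwa [Nat.sub_add_cancel hpos] at h
        have hPi : P i ω = ω - b i := hval1 i ω hωmem hbi
        refine ⟨⟨i, ?_, ?_⟩, hω1, hω2⟩
        · intro j
          by_cases hbj : b j < ω
          · rw [hPi, hval1 j ω hωmem hbj]
            have : b j ≤ b i := by
              by_contra hcon
              push_neg at hcon
              have hij : n < j.val := by
                by_contra hle
                push_neg at hle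
                exact absurd (hb'_mono hle) (not_le.mpr hcon)
              have : b' (n + 1) ≤ b j := hb'_mono hij
              linarith
            linarith
          · push_neg at hbj
            rw [hPi, hval2 j ω hωmem hbj]
            have : b j ≤ α := by
              have : b' j.val ≤ b' m₀ := hb'_mono j.isLt.le
              rw [hb'_total] at this; exact this
            linarith [hb_nonneg i]
        · rw [hPi]
          show ω - b i ≤ c i
          have h1 : b i + c i = b' (n + 1) := hb_add i
          linarith [hn]
    -- measurability of the event
    have hEmeas : MeasurableSet
        {ω : ℝ | ∃ i, (∀ j, P i ω ≤ P j ω) ∧ P i ω ≤ (w i / ∑ k, w k) * α} := by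
      have : {ω : ℝ | ∃ i, (∀ j, P i ω ≤ P j ω) ∧ P i ω ≤ (w i / ∑ k, w k) * α}
          = ⋃ i, ((⋂ j, {ω | P i ω ≤ P j ω}) ∩ {ω | P i ω ≤ (w i / ∑ k, w k) * α}) := by
        ext ω; simp [Set.mem_iUnion, Set.mem_iInter]
      rw [this]
      exact MeasurableSet.iUnion fun i =>
        ((MeasurableSet.iInter fun j => measurableSet_le (hPmeas i) (hPmeas j)).inter
          (measurableSet_le (hPmeas i) measurable_const))
    rw [Measure.restrict_apply hEmeas, hset, Real.volume_Ioc, sub_zero]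
end

section
/- WHP is p-value monotone: if p = (p_1,…,p_m) and q = (q_1,…,q_m) are two vectors of p-values with q_i ≤ p_i for all i (and with both vectors having pairwise distinct weighted p-values), then every hypothesis rejected by the weighted Holm procedure applied to p is also rejected by the weighted Holm procedure applied to q; in particular, lowering one or more p-values never decreases the set of rejections of WHP. -/
open Finset

/-- WHP is p-value monotone: if `q i ≤ p i` for all `i` (both vectors of
p-values in `[0,1]` having pairwise distinct weighted p-values), then every hypothesis
rejected by WHP applied to `p` is also rejected by WHP applied to `q`. -/
theorem whp_p_value_monotone (m : ℕ) (hm : 1 ≤ m) (w : Fin m → ℝ) (hw : ∀ i, 0 < w i)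
    (α : ℝ) (hα : α ∈ Set.Ioo (0 : ℝ) 1)
    (p q : Fin m → ℝ)
    (hp : ∀ i, p i ∈ Set.Icc (0 : ℝ) 1) (hq : ∀ i, q i ∈ Set.Icc (0 : ℝ) 1)
    (hqp : ∀ i, q i ≤ p i)
    (hpdist : Function.Injective fun i => p i / w i)
    (hqdist : Function.Injective fun i => q i / w i)
    (σp : Equiv.Perm (Fin m)) (hσp : Monotone fun j => p (σp j) / w (σp j))
    (σq : Equiv.Perm (Fin m)) (hσq : Monotone fun j => q (σq j) / w (σq j))
    (i : Fin m) (h : whpRejects m p w α σp i) :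
    whpRejects m q w α σq i := by
  obtain ⟨r, hri, hr⟩ := h
  -- Closed-testing characterization for p
  have closed_p : ∀ S : Finset (Fin m), i ∈ S →
      ∃ l ∈ S, p l / w l ≤ α / ∑ k ∈ S, w k := by
    intro S hiS
    set T := S.image σp.symm with hT
    have hTne : T.Nonempty := ⟨σp.symm i, Finset.mem_image_of_mem _ hiS⟩
    set j := T.min' hTne with hj
    have hjT : j ∈ T := Finset.min'_mem _ _
    obtain ⟨s, hsS, hs⟩ := Finset.mem_image.1 hjT
    have hjr : j ≤ r := by
      have hmem : σp.symm i ∈ T := Finset.mem_image_of_mem _ hiS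
      have hle := Finset.min'_le _ _ hmem
      have heq : σp.symm i = r := by rw [← hri]; simp
      exact hle.trans_eq heq
    have hwhp := hr j hjr
    have hsum : ∑ k ∈ S, w k ≤ ∑ k ∈ Finset.Ici j, w (σp k) := by
      have heq : ∑ k ∈ S, w k = ∑ k ∈ T, w (σp k) := by
        rw [hT, Finset.sum_image (fun a _ b _ hab => σp.symm.injective hab)]
        simp
      rw [heq]
      refine Finset.sum_le_sum_of_subset_of_nonneg ?_ (fun k _ _ => (hw _).le)
      intro k hk
      exact Finset.mem_Ici.2 (Finset.min'_le _ _ hk)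
    have hSpos : 0 < ∑ k ∈ S, w k := Finset.sum_pos (fun k _ => hw k) ⟨i, hiS⟩
    refine ⟨σp j, ?_, ?_⟩
    · rw [← hs]; simpa using hsS
    · refine hwhp.trans ?_
      gcongr
      exact hα.1.le
  -- Closed-testing characterization for q (by monotonicity)
  have closed_q : ∀ S : Finset (Fin m), i ∈ S →
      ∃ l ∈ S, q l / w l ≤ α / ∑ k ∈ S, w k := by
    intro S hiS
    obtain ⟨l, hlS, hle⟩ := closed_p S hiS
    refine ⟨l, hlS, le_trans ?_ hle⟩
    gcongr
    exacts [(hw l).le, hqp l]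
  -- Conclude WHP rejection for q
  refine ⟨σq.symm i, by simp, fun j hj => ?_⟩
  set S := (Finset.Ici j).image σq with hS
  have hiS : i ∈ S := Finset.mem_image.2 ⟨σq.symm i, Finset.mem_Ici.2 hj, by simp⟩
  obtain ⟨l, hlS, hle⟩ := closed_q S hiS
  obtain ⟨k, hk, hkl⟩ := Finset.mem_image.1 hlS
  have hsum : ∑ x ∈ S, w x = ∑ k ∈ Finset.Ici j, w (σq k) :=
    Finset.sum_image (fun a _ b _ hab => σq.injective hab)
  calc q (σq j) / w (σq j) ≤ q (σq k) / w (σq k) := hσq (Finset.mem_Ici.1 hk)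
    _ = q l / w l := by rw [hkl]
    _ ≤ α / ∑ x ∈ S, w x := hle
    _ = α / ∑ k ∈ Finset.Ici j, w (σq k) := by rw [hsum]
end
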